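/- arXiv:1710.08903 — 3 statements merged into one kernel-verified Lean document; each statement's English description precedes it below -/
import Mathlib

section
/- (Lemma 1, variance recursion) In the coupon collector model with n ≥ 2, write E_k = E(X^{(k)}) and V_k = Var(X^{(k)}). Then for every k with 2 ≤ k ≤ m, V_k = a_k (n − a_k) E_{k−1} (n − E_{k−1}) / (n^2 (n − 1)) + [a_k (a_k − 1) / (n (n − 1))] · V_{k−1}. -/
open MeasureTheory ProbabilityTheory Filter Finset
open scoped ENNReal NNReal

lemma aux_mem_inf {α β : Type*} [DecidableEq β] [Fintype β] (t : Finset α) (f : α → Finset β)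
    (x : β) : x ∈ t.inf f ↔ ∀ i ∈ t, x ∈ f i := by
  rw [← Finset.singleton_subset_iff, ← Finset.le_iff_subset, Finset.le_inf_iff]
  simp [Finset.le_iff_subset, Finset.singleton_subset_iff]

lemma aux_count_one {n : ℕ} (aa : ℕ) (ha1 : 1 ≤ aa) (j : Fin n) :
    ((univ : Finset (Finset (Fin n))).filter fun s => j ∈ s ∧ s.card = aa).card
      = (n-1).choose (aa-1) := by
  classical
  have h : ((univ : Finset (Finset (Fin n))).filter fun s => j ∈ s ∧ s.card = aa).card
      = ((univ.erase j).powersetCard (aa-1)).card := by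
    apply Finset.card_nbij' (fun s => s.erase j) (fun t => insert j t)
    · intro s hs
      simp only [Finset.mem_coe, mem_filter, mem_univ, true_and] at hs
      rw [Finset.mem_coe, Finset.mem_powersetCard]
      exact ⟨Finset.erase_subset_erase j (Finset.subset_univ s),
        by rw [Finset.card_erase_of_mem hs.1, hs.2]⟩
    · intro t ht
      rw [Finset.mem_coe, Finset.mem_powersetCard] at ht
      have hjt : j ∉ t := fun h => (Finset.mem_erase.1 (ht.1 h)).1 rfl
      simp only [Finset.mem_coe, mem_filter, mem_univ, true_and]
      exact ⟨Finset.mem_insert_self _ _,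
        by rw [Finset.card_insert_of_notMem hjt, ht.2]; omega⟩
    · intro s hs
      simp only [Finset.mem_coe, mem_filter, mem_univ, true_and] at hs
      exact Finset.insert_erase hs.1
    · intro t ht
      rw [Finset.mem_coe, Finset.mem_powersetCard] at ht
      have hjt : j ∉ t := fun h => (Finset.mem_erase.1 (ht.1 h)).1 rfl
      exact Finset.erase_insert hjt
  rw [h, Finset.card_powersetCard, Finset.card_erase_of_mem (Finset.mem_univ j),
    Finset.card_univ, Fintype.card_fin]

lemma aux_count_two {n : ℕ} (aa : ℕ) (ha2 : 2 ≤ aa) (j l : Fin n) (hjl : j ≠ l) :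
    ((univ : Finset (Finset (Fin n))).filter fun s => (j ∈ s ∧ l ∈ s) ∧ s.card = aa).card
      = (n-2).choose (aa-2) := by
  classical
  have h : ((univ : Finset (Finset (Fin n))).filter fun s => (j ∈ s ∧ l ∈ s) ∧ s.card = aa).card
      = (((univ.erase l).erase j).powersetCard (aa-2)).card := by
    apply Finset.card_nbij' (fun s => (s.erase l).erase j) (fun t => insert l (insert j t))
    · intro s hs
      simp only [Finset.mem_coe, mem_filter, mem_univ, true_and] at hs
      obtain ⟨⟨hj, hl⟩, hc⟩ := hs
      rw [Finset.mem_coe, Finset.mem_powersetCard]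
      refine ⟨Finset.erase_subset_erase j (Finset.erase_subset_erase l (Finset.subset_univ s)), ?_⟩
      rw [Finset.card_erase_of_mem (Finset.mem_erase.2 ⟨hjl, hj⟩), Finset.card_erase_of_mem hl, hc]
      omega
    · intro t ht
      rw [Finset.mem_coe, Finset.mem_powersetCard] at ht
      have hjt : j ∉ t := fun h => (Finset.mem_erase.1 (ht.1 h)).1 rfl
      have hlt : l ∉ t := fun h => (Finset.mem_erase.1 (Finset.mem_erase.1 (ht.1 h)).2).1 rfl
      have hlj : l ∉ insert j t := by
        simp only [Finset.mem_insert]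
        rintro (h | h)
        · exact hjl h.symm
        · exact hlt h
      simp only [Finset.mem_coe, mem_filter, mem_univ, true_and]
      refine ⟨⟨Finset.mem_insert_of_mem (Finset.mem_insert_self _ _), Finset.mem_insert_self _ _⟩, ?_⟩
      rw [Finset.card_insert_of_notMem hlj, Finset.card_insert_of_notMem hjt, ht.2]; omega
    · intro s hs
      simp only [Finset.mem_coe, mem_filter, mem_univ, true_and] at hs
      obtain ⟨⟨hj, hl⟩, hc⟩ := hs
      dsimp only
      rw [Finset.insert_erase (Finset.mem_erase.2 ⟨hjl, hj⟩), Finset.insert_erase hl]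
    · intro t ht
      rw [Finset.mem_coe, Finset.mem_powersetCard] at ht
      have hjt : j ∉ t := fun h => (Finset.mem_erase.1 (ht.1 h)).1 rfl
      have hlj : l ∉ insert j t := by
        simp only [Finset.mem_insert]
        rintro (h | h)
        · exact hjl h.symm
        · exact (fun hh => (Finset.mem_erase.1 (Finset.mem_erase.1 (ht.1 hh)).2).1 rfl) h
      dsimp only
      rw [Finset.erase_insert hlj, Finset.erase_insert hjt]
  rw [h, Finset.card_powersetCard, Finset.card_erase_of_mem
    (Finset.mem_erase.2 ⟨hjl, Finset.mem_univ j⟩), Finset.card_erase_of_mem (Finset.mem_univ l),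
    Finset.card_univ, Fintype.card_fin]
  congr 1

lemma aux_choose_one {n aa : ℕ} (hn : 1 ≤ n) (ha1 : 1 ≤ aa) :
    n * (n-1).choose (aa-1) = n.choose aa * aa := by
  have h1 : n - 1 + 1 = n := by omega
  have h2 : aa - 1 + 1 = aa := by omega
  have := Nat.add_one_mul_choose_eq (n-1) (aa-1)
  simp only [Nat.succ_eq_add_one, h1, h2] at this
  exact this

lemma aux_choose_two {n aa : ℕ} (hn : 2 ≤ n) (ha2 : 2 ≤ aa) :
    n * (n-1) * (n-2).choose (aa-2) = n.choose aa * (aa * (aa-1)) := by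
  have e1 : n - 2 = (n-1) - 1 := by omega
  have e2 : aa - 2 = (aa-1) - 1 := by omega
  have h1 : (n-1) * ((n-1)-1).choose ((aa-1)-1) = (n-1).choose (aa-1) * (aa-1) :=
    aux_choose_one (by omega) (by omega)
  have h2 : n * (n-1).choose (aa-1) = n.choose aa * aa := aux_choose_one (by omega) (by omega)
  calc n * (n-1) * (n-2).choose (aa-2) = n * ((n-1) * ((n-1)-1).choose ((aa-1)-1)) := by
        rw [e1, e2]; ring
    _ = n * ((n-1).choose (aa-1) * (aa-1)) := by rw [h1]
    _ = (n * (n-1).choose (aa-1)) * (aa-1) := by ring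
    _ = n.choose aa * aa * (aa-1) := by rw [h2]
    _ = _ := by ring

lemma aux_q {Ω : Type*} [MeasurableSpace Ω] (P : Measure Ω)
    {n : ℕ} (aa : ℕ) (hn : 2 ≤ n) (ha1 : 1 ≤ aa) (han : aa ≤ n)
    (T : Ω → Finset (Fin n))
    (hmeasT : ∀ s, MeasurableSet {ω | T ω = s})
    (hunifT : ∀ s, P {ω | T ω = s} = if s.card = aa then ((n.choose aa : ℝ≥0∞))⁻¹ else 0)
    (j l : Fin n) :
    (P (T ⁻¹' {s | j ∈ s ∧ l ∈ s})).toReal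
      = if j = l then (aa:ℝ)/n else (aa:ℝ)*((aa:ℝ)-1)/((n:ℝ)*((n:ℝ)-1)) := by
  classical
  have hset : T ⁻¹' {s | j ∈ s ∧ l ∈ s}
      = ⋃ s ∈ ((univ : Finset (Finset (Fin n))).filter fun s => j ∈ s ∧ l ∈ s),
          {ω | T ω = s} := by
    ext ω
    simp only [Set.mem_preimage, Set.mem_setOf_eq, Set.mem_iUnion, Finset.mem_coe,
      Finset.mem_filter, Finset.mem_univ, true_and, exists_prop]
    constructor
    · intro h; exact ⟨T ω, h, rfl⟩
    · rintro ⟨s, hs, h⟩; rw [h]; exact hs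
  have hdisj : (↑((univ : Finset (Finset (Fin n))).filter fun s => j ∈ s ∧ l ∈ s) :
      Set (Finset (Fin n))).PairwiseDisjoint (fun s => {ω | T ω = s}) := by
    intro s _ t _ hst
    apply Set.disjoint_left.2
    intro ω h1 h2
    exact hst (h1.symm.trans h2)
  rw [hset, measure_biUnion_finset hdisj (fun s _ => hmeasT s)]
  simp_rw [hunifT]
  rw [← Finset.sum_filter, Finset.sum_const, Finset.filter_filter]
  have hcpos : 0 < n.choose aa := Nat.choose_pos han
  have hcne : ((n.choose aa : ℝ)) ≠ 0 := by positivity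
  have hnne : (n:ℝ) ≠ 0 := by positivity
  have hn1ne : (n:ℝ) - 1 ≠ 0 := by
    have : (2:ℝ) ≤ n := by exact_mod_cast hn
    linarith
  rw [nsmul_eq_mul, ENNReal.toReal_mul, ENNReal.toReal_inv]
  rw [ENNReal.toReal_natCast, ENNReal.toReal_natCast]
  by_cases hjl : j = l
  · subst hjl
    rw [if_pos rfl]
    have hcount : ((univ : Finset (Finset (Fin n))).filter fun s => (j ∈ s ∧ j ∈ s) ∧ s.card = aa).card
        = (n-1).choose (aa-1) := by
      rw [show ((univ : Finset (Finset (Fin n))).filter fun s => (j ∈ s ∧ j ∈ s) ∧ s.card = aa)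
          = (univ.filter fun s => j ∈ s ∧ s.card = aa) from Finset.filter_congr (by tauto)]
      exact aux_count_one aa ha1 j
    rw [hcount]
    have hid : (n:ℝ) * ((n-1).choose (aa-1) : ℝ) = (n.choose aa : ℝ) * aa := by
      exact_mod_cast congrArg (Nat.cast : ℕ → ℝ) (aux_choose_one (by omega) ha1)
    field_simp
    linear_combination hid
  · rw [if_neg hjl]
    by_cases ha2 : 2 ≤ aa
    · have hcount : ((univ : Finset (Finset (Fin n))).filter
          fun s => (j ∈ s ∧ l ∈ s) ∧ s.card = aa).card = (n-2).choose (aa-2) :=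
        aux_count_two aa ha2 j l hjl
      rw [hcount]
      have hid : (n:ℝ) * ((n:ℝ)-1) * ((n-2).choose (aa-2) : ℝ)
          = (n.choose aa : ℝ) * ((aa:ℝ) * ((aa:ℝ)-1)) := by
        have := congrArg (Nat.cast : ℕ → ℝ) (aux_choose_two hn ha2)
        push_cast [Nat.cast_sub (by omega : 1 ≤ n), Nat.cast_sub (by omega : 1 ≤ aa)] at this
        linarith [this]
      field_simp
      linear_combination hid
    · have haa : aa = 1 := by omega
      subst haa
      have hcount : ((univ : Finset (Finset (Fin n))).filter
          fun s => (j ∈ s ∧ l ∈ s) ∧ s.card = 1) = ∅ := by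
        rw [Finset.filter_eq_empty_iff]
        rintro s _ ⟨⟨hj, hl⟩, hc⟩
        obtain ⟨x, rfl⟩ := Finset.card_eq_one.1 hc
        rw [Finset.mem_singleton] at hj hl
        exact hjl (hj.trans hl.symm)
      rw [hcount]
      norm_num

def Bset {Ω : Type*} {n m : ℕ} (S : Fin m → Ω → Finset (Fin n)) (kk : ℕ) (j l : Fin n) : Set Ω :=
  ⋂ i ∈ (univ.filter fun i : Fin m => (i : ℕ) < kk), S i ⁻¹' {s | j ∈ s ∧ l ∈ s}

lemma aux_pre_meas {Ω : Type*} [MeasurableSpace Ω] {n m : ℕ} (S : Fin m → Ω → Finset (Fin n))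
    (hmeas : ∀ i (s : Finset (Fin n)), MeasurableSet {ω | S i ω = s})
    (i : Fin m) (C : Set (Finset (Fin n))) : MeasurableSet (S i ⁻¹' C) := by
  have : S i ⁻¹' C = ⋃ s ∈ C, {ω | S i ω = s} := by
    ext ω
    simp only [Set.mem_preimage, Set.mem_iUnion, Set.mem_setOf_eq, exists_prop]
    constructor
    · intro h; exact ⟨S i ω, h, rfl⟩
    · rintro ⟨s, hs, h⟩; rw [h]; exact hs
  rw [this]
  exact MeasurableSet.biUnion (Set.to_countable C) (fun s _ => hmeas i s)

lemma Bset_meas {Ω : Type*} [MeasurableSpace Ω] {n m : ℕ} (S : Fin m → Ω → Finset (Fin n))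
    (hmeas : ∀ i (s : Finset (Fin n)), MeasurableSet {ω | S i ω = s})
    (kk : ℕ) (j l : Fin n) : MeasurableSet (Bset S kk j l) :=
  MeasurableSet.biInter (Set.to_countable _) (fun i _ => aux_pre_meas S hmeas i _)

lemma Bset_inter {Ω : Type*} {n m : ℕ} (S : Fin m → Ω → Finset (Fin n)) (kk : ℕ) (j l : Fin n) :
    Bset S kk j j ∩ Bset S kk l l = Bset S kk j l := by
  simp only [Bset]
  ext ω
  simp only [Set.mem_inter_iff, Set.mem_iInter, Set.mem_preimage, Set.mem_setOf_eq]
  constructor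
  · rintro ⟨h1, h2⟩ i hi
    exact ⟨(h1 i hi).1, (h2 i hi).2⟩
  · intro h
    exact ⟨fun i hi => ⟨(h i hi).1, (h i hi).1⟩, fun i hi => ⟨(h i hi).2, (h i hi).2⟩⟩

lemma card_eq_sum_indicator {Ω : Type*} {n m : ℕ} (S : Fin m → Ω → Finset (Fin n)) (kk : ℕ)
    (ω : Ω) :
    ((((univ.filter fun i : Fin m => (i : ℕ) < kk)).inf fun i => S i ω).card : ℝ)
      = ∑ j : Fin n, (Bset S kk j j).indicator (fun _ => (1:ℝ)) ω := by
  classical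
  have hmem : ∀ j : Fin n, (j ∈ ((univ.filter fun i : Fin m => (i : ℕ) < kk)).inf fun i => S i ω)
      ↔ ω ∈ Bset S kk j j := by
    intro j
    rw [aux_mem_inf]
    simp only [Bset, Set.mem_iInter, Set.mem_preimage, Set.mem_setOf_eq]
    constructor
    · intro h i hi; exact ⟨h i hi, h i hi⟩
    · intro h i hi; exact (h i hi).1
  rw [show (((univ.filter fun i : Fin m => (i : ℕ) < kk)).inf fun i => S i ω)
      = univ.filter (fun j => ω ∈ Bset S kk j j) from by
    ext j; simp only [Finset.mem_filter, Finset.mem_univ, true_and]; exact hmem j]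
  rw [Finset.card_filter]
  push_cast
  apply Finset.sum_congr rfl
  intro j _
  by_cases h : ω ∈ Bset S kk j j <;> simp [Set.indicator_apply, h]

lemma integral_card {Ω : Type*} [MeasurableSpace Ω] (P : Measure Ω) [IsProbabilityMeasure P]
    {n m : ℕ} (S : Fin m → Ω → Finset (Fin n))
    (hmeas : ∀ i (s : Finset (Fin n)), MeasurableSet {ω | S i ω = s}) (kk : ℕ) :
    ∫ ω, ((((univ.filter fun i : Fin m => (i : ℕ) < kk)).inf fun i => S i ω).card : ℝ) ∂P
      = ∑ j : Fin n, (P (Bset S kk j j)).toReal := by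
  rw [integral_congr_ae (ae_of_all _ (card_eq_sum_indicator S kk))]
  rw [integral_finset_sum _ (fun j _ =>
    (integrable_const (1:ℝ)).indicator (Bset_meas S hmeas kk j j))]
  apply Finset.sum_congr rfl
  intro j _
  rw [integral_indicator_const (1:ℝ) (Bset_meas S hmeas kk j j), smul_eq_mul, mul_one, measureReal_def]

lemma integral_card_sq {Ω : Type*} [MeasurableSpace Ω] (P : Measure Ω) [IsProbabilityMeasure P]
    {n m : ℕ} (S : Fin m → Ω → Finset (Fin n))
    (hmeas : ∀ i (s : Finset (Fin n)), MeasurableSet {ω | S i ω = s}) (kk : ℕ) :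
    ∫ ω, (((((univ.filter fun i : Fin m => (i : ℕ) < kk)).inf fun i => S i ω).card : ℝ))^2 ∂P
      = ∑ j : Fin n, ∑ l : Fin n, (P (Bset S kk j l)).toReal := by
  have hsq : ∀ ω, (((((univ.filter fun i : Fin m => (i : ℕ) < kk)).inf fun i => S i ω).card : ℝ))^2
      = ∑ j : Fin n, ∑ l : Fin n, (Bset S kk j l).indicator (fun _ => (1:ℝ)) ω := by
    intro ω
    rw [sq, card_eq_sum_indicator S kk ω, Finset.sum_mul_sum]
    apply Finset.sum_congr rfl; intro j _
    apply Finset.sum_congr rfl; intro l _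
    rw [← Bset_inter S kk j l, ← Set.inter_indicator_mul]
    simp
  rw [integral_congr_ae (ae_of_all _ hsq)]
  rw [integral_finset_sum _ (fun j _ => integrable_finset_sum _ (fun l _ =>
    (integrable_const (1:ℝ)).indicator (Bset_meas S hmeas kk j l)))]
  apply Finset.sum_congr rfl; intro j _
  rw [integral_finset_sum _ (fun l _ =>
    (integrable_const (1:ℝ)).indicator (Bset_meas S hmeas kk j l))]
  apply Finset.sum_congr rfl; intro l _
  rw [integral_indicator_const (1:ℝ) (Bset_meas S hmeas kk j l), smul_eq_mul, mul_one, measureReal_def]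

lemma card_memLp {Ω : Type*} [MeasurableSpace Ω] (P : Measure Ω) [IsProbabilityMeasure P]
    {n m : ℕ} (S : Fin m → Ω → Finset (Fin n))
    (hmeas : ∀ i (s : Finset (Fin n)), MeasurableSet {ω | S i ω = s}) (kk : ℕ) :
    MemLp (fun ω => ((((univ.filter fun i : Fin m => (i : ℕ) < kk)).inf fun i => S i ω).card : ℝ))
      2 P := by
  apply memLp_of_bounded (a := 0) (b := n)
  · apply ae_of_all
    intro ω
    constructor
    · positivity
    · have := Finset.card_le_univ (((univ.filter fun i : Fin m => (i : ℕ) < kk)).inf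
        fun i => S i ω)
      rw [Fintype.card_fin] at this
      exact_mod_cast this
  · apply Measurable.aestronglyMeasurable
    rw [show (fun ω => ((((univ.filter fun i : Fin m => (i : ℕ) < kk)).inf
        fun i => S i ω).card : ℝ)) = fun ω => ∑ j : Fin n,
        (Bset S kk j j).indicator (fun _ => (1:ℝ)) ω from funext (card_eq_sum_indicator S kk)]
    exact Finset.measurable_sum _ (fun j _ =>
      measurable_const.indicator (Bset_meas S hmeas kk j j))

lemma Bset_prod {Ω : Type*} [MeasurableSpace Ω] {P : Measure Ω} {n m : ℕ}
    {S : Fin m → Ω → Finset (Fin n)}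
    (hindep : iIndepFun (m := fun _ => (⊤ : MeasurableSpace (Finset (Fin n)))) S P)
    (kk : ℕ) (j l : Fin n) :
    P (Bset S kk j l) = ∏ i ∈ (univ.filter fun i : Fin m => (i : ℕ) < kk),
      P (S i ⁻¹' {s | j ∈ s ∧ l ∈ s}) :=
  hindep.measure_inter_preimage_eq_mul (univ.filter fun i : Fin m => (i : ℕ) < kk)
    (sets := fun _ => {s | j ∈ s ∧ l ∈ s}) (fun _ _ => MeasurableSpace.measurableSet_top)

lemma filter_lt_insert (m k : ℕ) (h1 : 1 ≤ k) (h2 : k ≤ m) :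
    ((univ : Finset (Fin m)).filter fun i : Fin m => (i : ℕ) < k)
      = insert (⟨k-1, by omega⟩ : Fin m)
          ((univ : Finset (Fin m)).filter fun i : Fin m => (i : ℕ) < k-1) := by
  ext i
  simp only [Finset.mem_filter, Finset.mem_univ, true_and, Finset.mem_insert, Fin.ext_iff]
  omega

lemma Bset_step {Ω : Type*} [MeasurableSpace Ω] {P : Measure Ω} {n m : ℕ}
    {S : Fin m → Ω → Finset (Fin n)}
    (hindep : iIndepFun (m := fun _ => (⊤ : MeasurableSpace (Finset (Fin n)))) S P)
    (k : ℕ) (h1 : 1 ≤ k) (h2 : k ≤ m) (j l : Fin n) :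
    P (Bset S k j l) = P (S ⟨k-1, by omega⟩ ⁻¹' {s | j ∈ s ∧ l ∈ s}) * P (Bset S (k-1) j l) := by
  rw [Bset_prod hindep, Bset_prod hindep, filter_lt_insert m k h1 h2,
    Finset.prod_insert (by simp)]

/-- **Lemma 1 (variance recursion).**
In the coupon collector model with `n ≥ 2`, writing `E_k = E(X^(k))` and `V_k = Var(X^(k))`
for the partial intersection counts `X^(k) = |S_1 ∩ ⋯ ∩ S_k|`, for every `2 ≤ k ≤ m`:
`V_k = a_k (n - a_k) E_{k-1} (n - E_{k-1}) / (n^2 (n-1)) + (a_k (a_k - 1) / (n (n-1))) V_{k-1}`. -/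
theorem coupon_variance_recursion
    {Ω : Type*} [MeasurableSpace Ω] (P : Measure Ω) [IsProbabilityMeasure P]
    (n m : ℕ) (hn : 2 ≤ n) (hm : 2 ≤ m)
    (a : Fin m → ℕ) (ha : ∀ i, 1 ≤ a i ∧ a i ≤ n)
    (S : Fin m → Ω → Finset (Fin n))
    (hmeas : ∀ i (s : Finset (Fin n)), MeasurableSet {ω | S i ω = s})
    (hindep : iIndepFun (m := fun _ => ⊤) S P)
    (hunif : ∀ i (s : Finset (Fin n)),
      P {ω | S i ω = s} = if s.card = a i then ((n.choose (a i) : ℝ≥0∞))⁻¹ else 0)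
    (X : ℕ → Ω → ℕ)
    (hX : ∀ (k : ℕ) ω,
      X k ω = ((Finset.univ.filter fun i : Fin m => (i : ℕ) < k).inf fun i => S i ω).card)
    (E V : ℕ → ℝ)
    (hE : ∀ k, E k = ∫ ω, (X k ω : ℝ) ∂P)
    (hV : ∀ k, V k = variance (fun ω => (X k ω : ℝ)) P) :
    ∀ k, 2 ≤ k → (hkm : k ≤ m) →
      V k = (a ⟨k - 1, by omega⟩ : ℝ) * ((n : ℝ) - a ⟨k - 1, by omega⟩)
              * E (k - 1) * ((n : ℝ) - E (k - 1)) / ((n : ℝ) ^ 2 * ((n : ℝ) - 1))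
            + (a ⟨k - 1, by omega⟩ : ℝ) * ((a ⟨k - 1, by omega⟩ : ℝ) - 1)
              / ((n : ℝ) * ((n : ℝ) - 1)) * V (k - 1) := by
  classical
  intro k hk2 hkm
  have hkm1 : k - 1 < m := by omega
  set ik : Fin m := ⟨k - 1, hkm1⟩ with hik
  set c₁ : ℝ := (a ik : ℝ) / n with hc₁
  set c₂ : ℝ := (a ik : ℝ) * ((a ik : ℝ) - 1) / ((n : ℝ) * ((n : ℝ) - 1)) with hc₂
  -- general expectation/variance formulas
  have hXfun : ∀ kk, (fun ω => (X kk ω : ℝ))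
      = fun ω => ((((univ.filter fun i : Fin m => (i : ℕ) < kk)).inf fun i => S i ω).card : ℝ) :=
    fun kk => funext fun ω => by rw [hX]
  have hEgen : ∀ kk, E kk = ∑ j : Fin n, (P (Bset S kk j j)).toReal := by
    intro kk
    rw [hE, hXfun kk, integral_card P S hmeas kk]
  have hVgen : ∀ kk, V kk = (∑ j : Fin n, ∑ l : Fin n, (P (Bset S kk j l)).toReal)
      - (∑ j : Fin n, (P (Bset S kk j j)).toReal) ^ 2 := by
    intro kk
    rw [hV, hXfun kk, variance_eq_sub (card_memLp P S hmeas kk)]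
    congr 1
    · rw [← integral_card_sq P S hmeas kk]
      apply integral_congr_ae
      apply ae_of_all
      intro ω
      simp [Pi.pow_apply]
    · rw [integral_card P S hmeas kk]
  -- step
  have hq : ∀ j l : Fin n, (P (S ik ⁻¹' {s | j ∈ s ∧ l ∈ s})).toReal
      = if j = l then c₁ else c₂ :=
    fun j l => aux_q P (a ik) hn (ha ik).1 (ha ik).2 (S ik) (hmeas ik) (hunif ik) j l
  have hstep : ∀ j l : Fin n, (P (Bset S k j l)).toReal
      = (if j = l then c₁ else c₂) * (P (Bset S (k-1) j l)).toReal := by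
    intro j l
    rw [Bset_step hindep k (by omega) hkm j l, ENNReal.toReal_mul, ← hq j l]
  set e : ℝ := ∑ j : Fin n, (P (Bset S (k-1) j j)).toReal with he
  set M : ℝ := ∑ j : Fin n, ∑ l : Fin n, (P (Bset S (k-1) j l)).toReal with hM
  have hdiag : ∑ j : Fin n, (P (Bset S k j j)).toReal = c₁ * e := by
    rw [he, Finset.mul_sum]
    apply Finset.sum_congr rfl
    intro j _
    rw [hstep j j, if_pos rfl]
  have hsq : ∑ j : Fin n, ∑ l : Fin n, (P (Bset S k j l)).toReal = c₂ * M + (c₁ - c₂) * e := by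
    calc ∑ j : Fin n, ∑ l : Fin n, (P (Bset S k j l)).toReal
        = ∑ j : Fin n, ∑ l : Fin n, (c₂ * (P (Bset S (k-1) j l)).toReal
            + if j = l then (c₁ - c₂) * (P (Bset S (k-1) j l)).toReal else 0) := by
          apply Finset.sum_congr rfl; intro j _
          apply Finset.sum_congr rfl; intro l _
          rw [hstep j l]
          by_cases h : j = l
          · subst h; rw [if_pos rfl, if_pos rfl]; ring
          · rw [if_neg h, if_neg h]; ring
      _ = ∑ j : Fin n, (c₂ * (∑ l : Fin n, (P (Bset S (k-1) j l)).toReal)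
            + (c₁ - c₂) * (P (Bset S (k-1) j j)).toReal) := by
          apply Finset.sum_congr rfl; intro j _
          rw [Finset.sum_add_distrib, ← Finset.mul_sum, Finset.sum_ite_eq]
          simp
      _ = c₂ * M + (c₁ - c₂) * e := by
          rw [Finset.sum_add_distrib, ← Finset.mul_sum, ← Finset.mul_sum, hM, he]
  have hEk1 : E (k-1) = e := by rw [hEgen, he]
  have hVk1 : V (k-1) = M - e ^ 2 := by rw [hVgen, hM, he]
  have hVk : V k = c₂ * M + (c₁ - c₂) * e - (c₁ * e) ^ 2 := by
    rw [hVgen k, hdiag, hsq]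
  rw [hVk, hVk1, hEk1]
  have hnne : (n : ℝ) ≠ 0 := by positivity
  have hn1ne : (n : ℝ) - 1 ≠ 0 := by
    have : (2:ℝ) ≤ n := by exact_mod_cast hn
    linarith
  rw [hc₁, hc₂]
  field_simp
  ring
end

section
/- (Theorem 2, order of the cell variance) In the asymptotic coupon collector setting, the variance of X_n has the same asymptotic order as (1 − a_1(n)/n)(1 − a_2(n)/n) · E(X_n); that is, both limsup and liminf of Var(X_n) / [(1 − a_1(n)/n)(1 − a_2(n)/n) E(X_n)] as n → ∞ are finite and strictly positive, where E(X_n) = n ∏_{i=1}^m (a_i(n)/n). -/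
open MeasureTheory ProbabilityTheory Filter Finset
open scoped ENNReal NNReal Topology

section CouponAux
variable {ι : Type*} [DecidableEq ι] {f g : ι → ℝ}

lemma aux_D1 (hg0 : ∀ i, 0 ≤ g i) (hgf : ∀ i, g i ≤ f i) (hf1 : ∀ i, f i ≤ 1)
    (s : Finset ι) :
    ∏ i ∈ s, f i - ∏ i ∈ s, g i ≤ ∑ i ∈ s, (f i - g i) * ∏ k ∈ s.erase i, f k := by
  induction s using Finset.induction_on with
  | empty => simp
  | @insert a s ha ih =>
    have hf0 : ∀ i, 0 ≤ f i := fun i => le_trans (hg0 i) (hgf i)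
    rw [prod_insert ha, prod_insert ha, sum_insert ha, erase_insert ha]
    have hsum : ∑ i ∈ s, (f i - g i) * ∏ k ∈ (insert a s).erase i, f k
        = f a * ∑ i ∈ s, (f i - g i) * ∏ k ∈ s.erase i, f k := by
      rw [mul_sum]
      refine Finset.sum_congr rfl fun i hi => ?_
      rw [Finset.erase_insert_of_ne (by rintro rfl; exact ha hi : a ≠ i), prod_insert (fun h => ha (Finset.mem_of_mem_erase h))]
      ring
    rw [hsum]
    have h1 : f a * ∏ i ∈ s, f i - g a * ∏ i ∈ s, g i
        = f a * (∏ i ∈ s, f i - ∏ i ∈ s, g i) + (f a - g a) * ∏ i ∈ s, g i := by ring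
    rw [h1]
    have h2 : ∏ i ∈ s, g i ≤ ∏ i ∈ s, f i := Finset.prod_le_prod (fun i _ => hg0 i) (fun i _ => hgf i)
    nlinarith [mul_le_mul_of_nonneg_left ih (hf0 a), (sub_nonneg.2 (hgf a))]

lemma aux_E_le_sum (hg0 : ∀ i, 0 ≤ g i) (hgf : ∀ i, g i ≤ f i) (hf1 : ∀ i, f i ≤ 1)
    (s : Finset ι) :
    ∑ i ∈ s, (f i - g i) * ∏ k ∈ s.erase i, f k ≤ ∑ i ∈ s, (f i - g i) := by
  refine Finset.sum_le_sum fun i _ => ?_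
  have h0 : (0:ℝ) ≤ ∏ k ∈ s.erase i, f k :=
    Finset.prod_nonneg fun k _ => le_trans (hg0 k) (hgf k)
  have h1 : ∏ k ∈ s.erase i, f k ≤ 1 :=
    Finset.prod_le_one (fun k _ => le_trans (hg0 k) (hgf k)) (fun k _ => hf1 k)
  nlinarith [sub_nonneg.2 (hgf i)]

lemma aux_D2 (hg0 : ∀ i, 0 ≤ g i) (hgf : ∀ i, g i ≤ f i) (hf1 : ∀ i, f i ≤ 1)
    (s : Finset ι) :
    ∑ i ∈ s, (f i - g i) * ∏ k ∈ s.erase i, f k - (∏ i ∈ s, f i - ∏ i ∈ s, g i)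
      ≤ (∑ i ∈ s, (f i - g i))^2 := by
  induction s using Finset.induction_on with
  | empty => simp
  | @insert a s ha ih =>
    have hf0 : ∀ i, 0 ≤ f i := fun i => le_trans (hg0 i) (hgf i)
    rw [prod_insert ha, prod_insert ha, sum_insert ha, sum_insert ha]
    have hsum : ∑ i ∈ s, (f i - g i) * ∏ k ∈ (insert a s).erase i, f k
        = f a * ∑ i ∈ s, (f i - g i) * ∏ k ∈ s.erase i, f k := by
      rw [mul_sum]
      refine Finset.sum_congr rfl fun i hi => ?_
      rw [Finset.erase_insert_of_ne (by rintro rfl; exact ha hi : a ≠ i),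
        prod_insert (fun h => ha (Finset.mem_of_mem_erase h))]
      ring
    rw [hsum, erase_insert ha]
    have hD1 := aux_D1 hg0 hgf hf1 s
    have hE := aux_E_le_sum hg0 hgf hf1 s
    have hda : 0 ≤ f a - g a := sub_nonneg.2 (hgf a)
    have hsd : 0 ≤ ∑ i ∈ s, (f i - g i) :=
      Finset.sum_nonneg fun i _ => sub_nonneg.2 (hgf i)
    have h2 : ∏ i ∈ s, g i ≤ ∏ i ∈ s, f i :=
      Finset.prod_le_prod (fun i _ => hg0 i) (fun i _ => hgf i)
    nlinarith [ih, mul_le_mul_of_nonneg_left ih (hf0 a), hf1 a, hf0 a,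
      mul_le_mul_of_nonneg_left (le_trans hD1 hE) hda]

lemma aux_one_sub_prod (hf0 : ∀ i, 0 ≤ f i) (hf1 : ∀ i, f i ≤ 1) (s : Finset ι) :
    1 - ∏ i ∈ s, f i ≤ ∑ i ∈ s, (1 - f i) := by
  have := aux_D1 (f := fun _ => (1:ℝ)) (g := f) hf0 hf1 (fun _ => le_refl 1) s
  simpa using this

def auxW (f : ι → ℝ) (s : Finset ι) : ℝ := ∑ i ∈ s, (1 - f i) * ∏ k ∈ s.erase i, f k

def auxPhi (f : ι → ℝ) (s : Finset ι) : ℝ := 1 - ∏ i ∈ s, f i - auxW f s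

lemma aux_W_nonneg (hf0 : ∀ i, 0 ≤ f i) (hf1 : ∀ i, f i ≤ 1) (s : Finset ι) :
    0 ≤ auxW f s :=
  Finset.sum_nonneg fun i _ => mul_nonneg (by linarith [hf1 i])
    (Finset.prod_nonneg fun k _ => hf0 k)

lemma aux_ins {a : ι} {s : Finset ι} (ha : a ∉ s) :
    auxPhi f (insert a s) = auxPhi f s + (1 - f a) * auxW f s := by
  unfold auxPhi auxW
  have hsum : ∑ i ∈ s, (1 - f i) * ∏ k ∈ (insert a s).erase i, f k
      = f a * ∑ i ∈ s, (1 - f i) * ∏ k ∈ s.erase i, f k := by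
    rw [mul_sum]
    refine Finset.sum_congr rfl fun i hi => ?_
    rw [Finset.erase_insert_of_ne (by rintro rfl; exact ha hi : a ≠ i),
      prod_insert (fun h => ha (Finset.mem_of_mem_erase h))]
    ring
  rw [sum_insert ha, hsum, erase_insert ha, prod_insert ha]
  ring

lemma aux_Phi_nonneg (hf0 : ∀ i, 0 ≤ f i) (hf1 : ∀ i, f i ≤ 1) (s : Finset ι) :
    0 ≤ auxPhi f s := by
  induction s using Finset.induction_on with
  | empty => simp [auxPhi, auxW]
  | @insert a s ha ih =>
    rw [aux_ins ha]
    have := aux_W_nonneg hf0 hf1 s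
    nlinarith [hf1 a]

lemma aux_low (hf0 : ∀ i, 0 ≤ f i) (hf1 : ∀ i, f i ≤ 1) {y : ι} (s : Finset ι)
    (hy : y ∈ s) {t : ℝ} (ht0 : 0 ≤ t) (ht1 : t ≤ 1) :
    t * (1 - f y) ≤ auxPhi f s + t * auxW f s := by
  induction s using Finset.induction_on generalizing t with
  | empty => simp at hy
  | @insert a s ha ih =>
    rw [aux_ins ha]
    have hWins : auxW f (insert a s) = (1 - f a) * ∏ i ∈ s, f i + f a * auxW f s := by
      unfold auxW
      have hsum : ∑ i ∈ s, (1 - f i) * ∏ k ∈ (insert a s).erase i, f k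
          = f a * ∑ i ∈ s, (1 - f i) * ∏ k ∈ s.erase i, f k := by
        rw [mul_sum]
        refine Finset.sum_congr rfl fun i hi => ?_
        rw [Finset.erase_insert_of_ne (by rintro rfl; exact ha hi : a ≠ i),
          prod_insert (fun h => ha (Finset.mem_of_mem_erase h))]
        ring
      rw [sum_insert ha, hsum, erase_insert ha]
    rw [hWins]
    have hPhi0 := aux_Phi_nonneg hf0 hf1 s
    have hW0 := aux_W_nonneg hf0 hf1 s
    have hp0 : (0:ℝ) ≤ ∏ i ∈ s, f i := Finset.prod_nonneg fun k _ => hf0 k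
    have hPhi : auxPhi f s = 1 - ∏ i ∈ s, f i - auxW f s := by unfold auxPhi; ring
    rcases Finset.mem_insert.1 hy with hya | hys
    · subst hya
      rw [hPhi]
      rw [hPhi] at hPhi0
      have h1 : (0:ℝ) ≤ (1 - t*(1 - f y)) * (1 - ∏ i ∈ s, f i - auxW f s) := by
        refine mul_nonneg ?_ hPhi0
        nlinarith [hf0 y, hf1 y]
      have h2 : (0:ℝ) ≤ ((1-t)*(1 - f y)) * auxW f s := by
        refine mul_nonneg (mul_nonneg (by linarith) (by linarith [hf1 y])) hW0
      have h3 : (0:ℝ) ≤ t * (f y * auxW f s) :=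
        mul_nonneg ht0 (mul_nonneg (hf0 y) hW0)
      nlinarith [h1, h2, h3]
    · have ht' : (0:ℝ) ≤ (1 - f a) + t * f a := by nlinarith [hf0 a, hf1 a]
      have ht'1 : (1 - f a) + t * f a ≤ 1 := by nlinarith [hf0 a]
      have hIH := ih hys ht' ht'1
      have h4 : (0:ℝ) ≤ t * (1 - f a) * ∏ i ∈ s, f i :=
        mul_nonneg (mul_nonneg ht0 (by linarith [hf1 a])) hp0
      have h5 : (0:ℝ) ≤ ((1 - f a)*(1-t)) * (1 - f y) :=
        mul_nonneg (mul_nonneg (by linarith [hf1 a]) (by linarith)) (by linarith [hf1 y])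
      nlinarith [hIH, h4, h5]

lemma aux_phi_lower [Fintype ι] (hf0 : ∀ i, 0 ≤ f i) (hf1 : ∀ i, f i ≤ 1)
    {x y : ι} (hxy : x ≠ y) :
    (1 - f x) * (1 - f y) ≤ auxPhi f Finset.univ := by
  have hx : (Finset.univ : Finset ι) = insert x ((Finset.univ : Finset ι).erase x) :=
    (Finset.insert_erase (Finset.mem_univ x)).symm
  rw [hx, aux_ins (Finset.notMem_erase x _)]
  have hy : y ∈ (Finset.univ : Finset ι).erase x :=
    Finset.mem_erase.2 ⟨hxy.symm, Finset.mem_univ y⟩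
  have := aux_low hf0 hf1 _ hy (t := 1 - f x) (by linarith [hf1 x]) (by linarith [hf0 x])
  linarith

lemma aux_phi_upper (hf0 : ∀ i, 0 ≤ f i) (hf1 : ∀ i, f i ≤ 1) (s : Finset ι) :
    auxPhi f s ≤ ∑ i ∈ s, ((1 - f i) * ∑ k ∈ s.erase i, (1 - f k)) := by
  have h1 : auxPhi f s ≤ ∑ i ∈ s, ((1 - f i) - (1 - f i) * ∏ k ∈ s.erase i, f k) := by
    unfold auxPhi auxW
    rw [Finset.sum_sub_distrib]
    linarith [aux_one_sub_prod hf0 hf1 s]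
  refine le_trans h1 (Finset.sum_le_sum fun i _ => ?_)
  have h2 := aux_one_sub_prod hf0 hf1 (s.erase i)
  nlinarith [hf1 i, mul_le_mul_of_nonneg_left h2 (by linarith [hf1 i] : (0:ℝ) ≤ 1 - f i)]


lemma card_superset {γ : Type*} [Fintype γ] [DecidableEq γ] (t : Finset γ) (k : ℕ)
    (ht : t.card ≤ k) :
    ((Finset.univ : Finset (Finset γ)).filter (fun s => s.card = k ∧ t ⊆ s)).card
      = (Fintype.card γ - t.card).choose (k - t.card) := by
  rw [show Fintype.card γ - t.card = ((Finset.univ : Finset γ) \ t).card from by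
    rw [Finset.card_sdiff_of_subset (Finset.subset_univ t), Finset.card_univ]]
  rw [← Finset.card_powersetCard (k - t.card) ((Finset.univ : Finset γ) \ t)]
  apply Finset.card_bij' (fun s _ => s \ t) (fun u _ => u ∪ t)
  · intro s hs
    simp only [Finset.mem_filter, Finset.mem_univ, true_and] at hs
    rw [Finset.mem_powersetCard]
    exact ⟨Finset.sdiff_subset_sdiff (Finset.subset_univ s) le_rfl,
      by rw [Finset.card_sdiff_of_subset hs.2, hs.1]⟩
  · intro u hu
    rw [Finset.mem_powersetCard] at hu
    have hdisj : Disjoint u t :=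
      Finset.disjoint_left.2 fun x hx hxt => (Finset.mem_sdiff.1 (hu.1 hx)).2 hxt
    simp only [Finset.mem_filter, Finset.mem_univ, true_and]
    constructor
    · rw [Finset.card_union_of_disjoint hdisj, hu.2]
      omega
    · exact Finset.subset_union_right
  · intro s hs
    simp only [Finset.mem_filter, Finset.mem_univ, true_and] at hs
    exact Finset.sdiff_union_of_subset hs.2
  · intro u hu
    rw [Finset.mem_powersetCard] at hu
    have hdisj : Disjoint u t :=
      Finset.disjoint_left.2 fun x hx hxt => (Finset.mem_sdiff.1 (hu.1 hx)).2 hxt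
    exact Finset.union_sdiff_cancel_right hdisj

lemma choose_ratio1 {n k : ℕ} (h1 : 1 ≤ k) (h2 : k ≤ n) :
    (((n-1).choose (k-1) : ℝ)) * (((n.choose k : ℕ) : ℝ))⁻¹ = (k : ℝ) / n := by
  obtain ⟨n', rfl⟩ : ∃ n', n = n' + 1 := ⟨n - 1, by omega⟩
  obtain ⟨k', rfl⟩ : ∃ k', k = k' + 1 := ⟨k - 1, by omega⟩
  have hid : (n' + 1) * n'.choose k' = (n'+1).choose (k'+1) * (k'+1) :=
    Nat.add_one_mul_choose_eq n' k'
  have hc : (0:ℝ) < ((n'+1).choose (k'+1) : ℝ) := by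
    exact_mod_cast Nat.cast_pos.2 (Nat.choose_pos (by omega))
  have hn : (0:ℝ) < (n' + 1 : ℝ) := by positivity
  have hidr : ((n':ℝ) + 1) * (n'.choose k' : ℝ) = ((n'+1).choose (k'+1) : ℝ) * ((k':ℝ)+1) := by
    exact_mod_cast hid
  simp only [Nat.add_sub_cancel]
  push_cast
  field_simp
  linarith [hidr]

lemma choose_ratio2 {n k : ℕ} (h1 : 2 ≤ k) (h2 : k ≤ n) :
    (((n-2).choose (k-2) : ℝ)) * (((n.choose k : ℕ) : ℝ))⁻¹
      = ((k : ℝ) * ((k:ℝ) - 1)) / ((n:ℝ) * ((n:ℝ)-1)) := by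
  obtain ⟨n', rfl⟩ : ∃ n', n = n' + 2 := ⟨n - 2, by omega⟩
  obtain ⟨k', rfl⟩ : ∃ k', k = k' + 2 := ⟨k - 2, by omega⟩
  have hid1 : (n' + 2) * (n'+1).choose (k'+1) = (n'+2).choose (k'+2) * (k'+2) :=
    Nat.add_one_mul_choose_eq (n'+1) (k'+1)
  have hid2 : (n' + 1) * n'.choose k' = (n'+1).choose (k'+1) * (k'+1) :=
    Nat.add_one_mul_choose_eq n' k'
  have hc : (0:ℝ) < ((n'+2).choose (k'+2) : ℝ) := by
    exact_mod_cast Nat.cast_pos.2 (Nat.choose_pos (by omega))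
  have hid1r : ((n':ℝ) + 2) * ((n'+1).choose (k'+1) : ℝ)
      = ((n'+2).choose (k'+2) : ℝ) * ((k':ℝ)+2) := by exact_mod_cast hid1
  have hid2r : ((n':ℝ) + 1) * (n'.choose k' : ℝ)
      = ((n'+1).choose (k'+1) : ℝ) * ((k':ℝ)+1) := by exact_mod_cast hid2
  simp only [Nat.add_sub_cancel]
  push_cast
  have hn1 : (0:ℝ) < (n' : ℝ) + 1 := by positivity
  have hn2 : (0:ℝ) < (n' : ℝ) + 2 := by positivity
  have key : (n'.choose k' : ℝ) * (((n':ℝ)+2)*((n':ℝ)+1))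
      = ((k':ℝ)+2)*((k':ℝ)+1)*((n'+2).choose (k'+2):ℝ) := by
    linear_combination (((n':ℝ)+2))*hid2r + (((k':ℝ)+1))*hid1r
  rw [← div_eq_mul_inv, div_eq_div_iff hc.ne' (by nlinarith : ((↑n' + 2) * ((n':ℝ) + 2 - 1)) ≠ 0)]
  linear_combination key

lemma meas_superset {n : ℕ} {Ωn : Type} [MeasurableSpace Ωn]
    (f : Ωn → Finset (Fin n))
    (hmeas : ∀ s, MeasurableSet {ω | f ω = s}) (t : Finset (Fin n)) :
    MeasurableSet {ω | t ⊆ f ω} := by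
  have hset : {ω | t ⊆ f ω} = ⋃ s ∈ ((Finset.univ : Finset (Finset (Fin n))).filter
      (fun s => t ⊆ s)), {ω | f ω = s} := by
    ext ω
    simp only [Set.mem_setOf_eq, Set.mem_iUnion, Finset.mem_filter, Finset.mem_univ, true_and]
    exact ⟨fun h => ⟨f ω, h, rfl⟩, fun ⟨s, hs, he⟩ => he ▸ hs⟩
  rw [hset]
  exact (Finset.measurableSet_biUnion _ fun s _ => hmeas s)

lemma prob_superset {n bn : ℕ} {Ωn : Type} [MeasurableSpace Ωn] (Pn : Measure Ωn)
    (f : Ωn → Finset (Fin n))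
    (hmeas : ∀ s, MeasurableSet {ω | f ω = s})
    (hunif : ∀ s, Pn {ω | f ω = s} = if s.card = bn then ((n.choose bn : ℝ≥0∞))⁻¹ else 0)
    (t : Finset (Fin n)) :
    Pn {ω | t ⊆ f ω}
      = ((((Finset.univ : Finset (Finset (Fin n))).filter
            (fun s => s.card = bn ∧ t ⊆ s)).card : ℝ≥0∞)) * ((n.choose bn : ℝ≥0∞))⁻¹ := by
  have hset : {ω | t ⊆ f ω} = ⋃ s ∈ ((Finset.univ : Finset (Finset (Fin n))).filter
      (fun s => t ⊆ s)), {ω | f ω = s} := by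
    ext ω
    simp only [Set.mem_setOf_eq, Set.mem_iUnion, Finset.mem_filter, Finset.mem_univ, true_and]
    exact ⟨fun h => ⟨f ω, h, rfl⟩, fun ⟨s, hs, he⟩ => he ▸ hs⟩
  rw [hset, measure_biUnion_finset ?_ (fun s _ => hmeas s)]
  · rw [Finset.sum_congr rfl (fun s _ => hunif s)]
    rw [← Finset.sum_filter, Finset.filter_filter, Finset.sum_const]
    rw [show ((Finset.univ : Finset (Finset (Fin n))).filter (fun s => t ⊆ s ∧ s.card = bn))
        = ((Finset.univ : Finset (Finset (Fin n))).filter (fun s => s.card = bn ∧ t ⊆ s)) from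
      Finset.filter_congr (fun s _ => by tauto)]
    simp [nsmul_eq_mul]
  · intro s1 h1 s2 h2 hne
    refine Set.disjoint_left.2 fun ω hω1 hω2 => ?_
    exact hne ((hω1 : f ω = s1).symm.trans (hω2 : f ω = s2))

lemma prob_single_toReal {n bn : ℕ} {Ωn : Type} [MeasurableSpace Ωn] (Pn : Measure Ωn)
    (f : Ωn → Finset (Fin n))
    (hmeas : ∀ s, MeasurableSet {ω | f ω = s})
    (hunif : ∀ s, Pn {ω | f ω = s} = if s.card = bn then ((n.choose bn : ℝ≥0∞))⁻¹ else 0)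
    (hb1 : 1 ≤ bn) (hbn : bn ≤ n) (j : Fin n) :
    (Pn {ω | ({j} : Finset (Fin n)) ⊆ f ω}).toReal = (bn : ℝ) / n := by
  rw [prob_superset Pn f hmeas hunif]
  rw [card_superset _ _ (by simpa using hb1)]
  simp only [Finset.card_singleton, Fintype.card_fin]
  rw [ENNReal.toReal_mul, ENNReal.toReal_inv]
  simp only [ENNReal.toReal_natCast]
  exact choose_ratio1 hb1 hbn

lemma prob_pair_toReal {n bn : ℕ} {Ωn : Type} [MeasurableSpace Ωn] (Pn : Measure Ωn)
    (f : Ωn → Finset (Fin n))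
    (hmeas : ∀ s, MeasurableSet {ω | f ω = s})
    (hunif : ∀ s, Pn {ω | f ω = s} = if s.card = bn then ((n.choose bn : ℝ≥0∞))⁻¹ else 0)
    (hb1 : 1 ≤ bn) (hbn : bn ≤ n) {j k : Fin n} (hjk : j ≠ k) :
    (Pn {ω | ({j, k} : Finset (Fin n)) ⊆ f ω}).toReal
      = ((bn : ℝ) * ((bn:ℝ) - 1)) / ((n:ℝ) * ((n:ℝ) - 1)) := by
  have hcard2 : ({j, k} : Finset (Fin n)).card = 2 := by
    rw [Finset.card_insert_of_notMem (by simpa using hjk), Finset.card_singleton]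
  rw [prob_superset Pn f hmeas hunif]
  rcases Nat.lt_or_ge bn 2 with hb2 | hb2
  · have hbn1 : bn = 1 := by omega
    have hempty : ((Finset.univ : Finset (Finset (Fin n))).filter
        (fun s => s.card = bn ∧ ({j,k} : Finset (Fin n)) ⊆ s)) = ∅ := by
      rw [Finset.filter_eq_empty_iff]
      rintro s - ⟨hc, hsub⟩
      have := Finset.card_le_card hsub
      rw [hcard2, hc, hbn1] at this
      omega
    rw [hempty]
    simp [hbn1]
  · rw [card_superset _ _ (by rw [hcard2]; exact hb2)]
    rw [hcard2, Fintype.card_fin]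
    rw [ENNReal.toReal_mul, ENNReal.toReal_inv]
    simp only [ENNReal.toReal_natCast]
    exact choose_ratio2 hb2 hbn

lemma fixed_main {m n : ℕ} (hm : 1 ≤ m) (hn : 2 ≤ n) {Ωn : Type} [MeasurableSpace Ωn]
    (Pn : Measure Ωn) [IsProbabilityMeasure Pn]
    (bv : Fin m → ℕ) (S : Fin m → Ωn → Finset (Fin n))
    (hmeas : ∀ i s, MeasurableSet {ω | S i ω = s})
    (hindep : iIndepFun (m := fun _ => ⊤) S Pn)
    (hunif : ∀ i s, Pn {ω | S i ω = s}
      = if s.card = bv i then ((n.choose (bv i) : ℝ≥0∞))⁻¹ else 0)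
    (hb1 : ∀ i, 1 ≤ bv i) (hbn : ∀ i, bv i ≤ n)
    (Xn : Ωn → ℕ) (hX : ∀ ω, Xn ω = (Finset.univ.inf fun i => S i ω).card) :
    (∫ ω, (Xn ω : ℝ) ∂Pn) = n * ∏ i, ((bv i : ℝ)/n) ∧
    variance (fun ω => (Xn ω : ℝ)) Pn
      = n * ∏ i, ((bv i : ℝ)/n)
        + n*((n:ℝ)-1) * ∏ i, (((bv i : ℝ)*((bv i:ℝ) - 1))/((n:ℝ)*((n:ℝ)-1)))
        - (n * ∏ i, ((bv i : ℝ)/n))^2 := by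
  classical
  haveI : Nonempty (Fin m) := ⟨⟨0, by omega⟩⟩
  set A : Fin n → Set Ωn := fun j => ⋂ i, {ω | ({j} : Finset (Fin n)) ⊆ S i ω} with hA
  have hAmeas : ∀ j, MeasurableSet (A j) := fun j =>
    MeasurableSet.iInter fun i => meas_superset (S i) (hmeas i) {j}
  have hPA : ∀ j, Pn (A j) = ∏ i, Pn {ω | ({j} : Finset (Fin n)) ⊆ S i ω} := by
    intro j
    exact hindep.meas_iInter fun i =>
      ⟨{s | ({j} : Finset (Fin n)) ⊆ s}, trivial, rfl⟩
  have hAinter : ∀ j k, A j ∩ A k = ⋂ i, {ω | ({j, k} : Finset (Fin n)) ⊆ S i ω} := by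
    intro j k
    ext ω
    simp only [hA, Set.mem_inter_iff, Set.mem_iInter, Set.mem_setOf_eq,
      Finset.singleton_subset_iff, Finset.insert_subset_iff]
    exact ⟨fun h i => ⟨h.1 i, h.2 i⟩, fun h => ⟨fun i => (h i).1, fun i => (h i).2⟩⟩
  have hPAjk : ∀ j k, Pn (A j ∩ A k)
      = ∏ i, Pn {ω | ({j, k} : Finset (Fin n)) ⊆ S i ω} := by
    intro j k
    rw [hAinter]
    exact hindep.meas_iInter fun i =>
      ⟨{s | ({j, k} : Finset (Fin n)) ⊆ s}, trivial, rfl⟩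
  have prA : ∀ j, (Pn (A j)).toReal = ∏ i, ((bv i : ℝ)/n) := by
    intro j
    rw [hPA, ENNReal.toReal_prod]
    exact Finset.prod_congr rfl fun i _ =>
      prob_single_toReal Pn (S i) (hmeas i) (hunif i) (hb1 i) (hbn i) j
  have prAjk : ∀ j k, j ≠ k → (Pn (A j ∩ A k)).toReal
      = ∏ i, (((bv i : ℝ)*((bv i:ℝ) - 1))/((n:ℝ)*((n:ℝ)-1))) := by
    intro j k hjk
    rw [hPAjk, ENNReal.toReal_prod]
    exact Finset.prod_congr rfl fun i _ =>
      prob_pair_toReal Pn (S i) (hmeas i) (hunif i) (hb1 i) (hbn i) hjk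
  have hXeq : (fun ω => (Xn ω : ℝ))
      = fun ω => ∑ j, Set.indicator (A j) (fun _ => (1:ℝ)) ω := by
    funext ω
    have hset : (Finset.univ.inf fun i => S i ω)
        = Finset.univ.filter (fun j => ω ∈ A j) := by
      ext j
      rw [← Finset.inf'_eq_inf (Finset.univ_nonempty) (fun i => S i ω)]
      simp only [Finset.mem_inf', Finset.mem_filter, Finset.mem_univ, true_and, hA,
        Set.mem_iInter, Set.mem_setOf_eq, Finset.singleton_subset_iff]
      tauto
    rw [hX, hset]
    rw [Finset.card_filter]
    push_cast
    refine Finset.sum_congr rfl fun j _ => ?_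
    simp [Set.indicator_apply]
  have hInd : ∀ (B : Set Ωn), MeasurableSet B →
      Integrable (Set.indicator B (fun _ => (1:ℝ))) Pn := fun B hB =>
    (integrable_const (1:ℝ)).indicator hB
  have hEX : (∫ ω, (Xn ω : ℝ) ∂Pn) = n * ∏ i, ((bv i : ℝ)/n) := by
    rw [hXeq, integral_finset_sum _ (fun j _ => hInd _ (hAmeas j))]
    have : ∀ j : Fin n, (∫ ω, Set.indicator (A j) (fun _ => (1:ℝ)) ω ∂Pn)
        = ∏ i, ((bv i : ℝ)/n) := by
      intro j
      rw [integral_indicator_const (1:ℝ) (hAmeas j), measureReal_def, prA j, smul_eq_mul, mul_one]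
    rw [Finset.sum_congr rfl fun j _ => this j, Finset.sum_const, Finset.card_univ,
      Fintype.card_fin, nsmul_eq_mul]
  refine ⟨hEX, ?_⟩
  have hX2eq : (fun ω => (Xn ω : ℝ)^2)
      = fun ω => ∑ j, ∑ k, Set.indicator (A j ∩ A k) (fun _ => (1:ℝ)) ω := by
    funext ω
    have h1 := congrFun hXeq ω
    rw [h1, sq, Finset.sum_mul_sum]
    refine Finset.sum_congr rfl fun j _ => Finset.sum_congr rfl fun k _ => ?_
    by_cases hj : ω ∈ A j <;> by_cases hk : ω ∈ A k <;>
      simp [Set.indicator_apply, hj, hk]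
  have hEX2 : (∫ ω, (Xn ω : ℝ)^2 ∂Pn)
      = ∑ j : Fin n, ∑ k : Fin n, (Pn (A j ∩ A k)).toReal := by
    rw [hX2eq, integral_finset_sum _ (fun j _ =>
      integrable_finset_sum _ (fun k _ => hInd _ ((hAmeas j).inter (hAmeas k))))]
    refine Finset.sum_congr rfl fun j _ => ?_
    rw [integral_finset_sum _ (fun k _ => hInd _ ((hAmeas j).inter (hAmeas k)))]
    refine Finset.sum_congr rfl fun k _ => ?_
    rw [integral_indicator_const (1:ℝ) ((hAmeas j).inter (hAmeas k)), smul_eq_mul, mul_one, measureReal_def]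
  have hdouble : ∑ j : Fin n, ∑ k : Fin n, (Pn (A j ∩ A k)).toReal
      = n * ∏ i, ((bv i : ℝ)/n)
        + n*((n:ℝ)-1) * ∏ i, (((bv i : ℝ)*((bv i:ℝ) - 1))/((n:ℝ)*((n:ℝ)-1))) := by
    have hinner : ∀ j : Fin n, ∑ k : Fin n, (Pn (A j ∩ A k)).toReal
        = ∏ i, ((bv i : ℝ)/n)
          + ((n:ℝ)-1) * ∏ i, (((bv i : ℝ)*((bv i:ℝ) - 1))/((n:ℝ)*((n:ℝ)-1))) := by
      intro j
      rw [← Finset.add_sum_erase _ _ (Finset.mem_univ j)]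
      rw [Set.inter_self, prA j]
      congr 1
      rw [Finset.sum_congr rfl (fun k hk => prAjk j k (Ne.symm (Finset.ne_of_mem_erase hk)))]
      rw [Finset.sum_const, Finset.card_erase_of_mem (Finset.mem_univ j),
        Finset.card_univ, Fintype.card_fin, nsmul_eq_mul]
      congr 1
      push_cast [Nat.cast_sub (by omega : 1 ≤ n)]
      ring
    rw [Finset.sum_congr rfl fun j _ => hinner j, Finset.sum_const, Finset.card_univ,
      Fintype.card_fin, nsmul_eq_mul]
    ring
  have hXmeasR : Measurable (fun ω => (Xn ω : ℝ)) := by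
    rw [hXeq]
    exact Finset.measurable_sum _ fun j _ => measurable_const.indicator (hAmeas j)
  have hbound : ∀ ω, ‖(Xn ω : ℝ)‖ ≤ (n : ℝ) := by
    intro ω
    rw [hX, Real.norm_natCast]
    have := Finset.card_le_univ (Finset.univ.inf fun i => S i ω)
    rw [Fintype.card_fin] at this
    exact_mod_cast this
  have hmem2 : MemLp (fun ω => (Xn ω : ℝ)) 2 Pn :=
    MemLp.of_bound hXmeasR.aestronglyMeasurable (n : ℝ) (Filter.Eventually.of_forall hbound)
  rw [variance_eq_sub hmem2]
  have hpow : (Pn[(fun ω => (Xn ω : ℝ)) ^ 2]) = ∫ ω, (Xn ω : ℝ)^2 ∂Pn := by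
    refine integral_congr_ae (Filter.Eventually.of_forall fun ω => ?_)
    simp [Pi.pow_apply]
  rw [hpow, hEX2, hdouble, hEX]
lemma var_bounds {m n : ℕ} (hm : 2 ≤ m) (hn2 : 2 ≤ n) (bv : Fin m → ℕ)
    (hmono : Monotone bv) (hb1 : ∀ i, 1 ≤ bv i) (hbn : ∀ i, bv i ≤ n - 1) :
    (1 - (bv ⟨0, by omega⟩ : ℝ)/n) * (1 - (bv ⟨1, by omega⟩ : ℝ)/n)
        * ((n:ℝ) * ∏ i, ((bv i:ℝ)/n))
      ≤ (n:ℝ) * ∏ i, ((bv i:ℝ)/n)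
        + (n:ℝ)*((n:ℝ)-1) * ∏ i, (((bv i:ℝ)*((bv i:ℝ)-1))/((n:ℝ)*((n:ℝ)-1)))
        - ((n:ℝ) * ∏ i, ((bv i:ℝ)/n))^2
    ∧ (n:ℝ) * ∏ i, ((bv i:ℝ)/n)
        + (n:ℝ)*((n:ℝ)-1) * ∏ i, (((bv i:ℝ)*((bv i:ℝ)-1))/((n:ℝ)*((n:ℝ)-1)))
        - ((n:ℝ) * ∏ i, ((bv i:ℝ)/n))^2
      ≤ (3*(m:ℝ)^2) * ((1 - (bv ⟨0, by omega⟩ : ℝ)/n) * (1 - (bv ⟨1, by omega⟩ : ℝ)/n)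
        * ((n:ℝ) * ∏ i, ((bv i:ℝ)/n))) := by
  have hnpos : (0:ℝ) < n := by positivity
  have hn1 : (0:ℝ) < (n:ℝ) - 1 := by
    have : (2:ℝ) ≤ n := by exact_mod_cast hn2
    linarith
  set i0 : Fin m := ⟨0, by omega⟩ with hi0
  set i1 : Fin m := ⟨1, by omega⟩ with hi1
  set B : Fin m → ℝ := fun i => (bv i : ℝ)/n with hB
  set g : Fin m → ℝ := fun i => ((bv i : ℝ) - 1)/((n:ℝ)-1) with hg
  have hBub : ∀ i, (bv i : ℝ) ≤ (n:ℝ) - 1 := by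
    intro i
    have h := hbn i
    have : (bv i : ℝ) ≤ ((n - 1 : ℕ) : ℝ) := by exact_mod_cast h
    rwa [Nat.cast_sub (by omega), Nat.cast_one] at this
  have hB0 : ∀ i, 0 < B i := fun i => by
    have : (0:ℝ) < (bv i : ℝ) := by exact_mod_cast hb1 i
    positivity
  have hB1 : ∀ i, B i ≤ 1 := fun i => by
    rw [hB, div_le_one hnpos]
    linarith [hBub i]
  have hg0 : ∀ i, 0 ≤ g i := fun i => by
    have h : (1:ℝ) ≤ (bv i : ℝ) := by exact_mod_cast hb1 i
    rw [hg]
    apply div_nonneg <;> linarith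
  have hgB : ∀ i, g i ≤ B i := fun i => by
    rw [hg, hB, div_le_div_iff₀ hn1 hnpos]
    nlinarith [hBub i, (by exact_mod_cast hb1 i : (1:ℝ) ≤ (bv i : ℝ))]
  have hdiff : ∀ i, B i - g i = (1 - B i)/((n:ℝ)-1) := fun i => by
    rw [hB, hg]
    field_simp
    ring
  -- monotonicity of B
  have hBmono : ∀ i j : Fin m, i ≤ j → B i ≤ B j := fun i j hij => by
    have h : (bv i : ℝ) ≤ bv j := by exact_mod_cast hmono hij
    show (bv i:ℝ)/n ≤ (bv j:ℝ)/n
    gcongr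
  have hB0' : ∀ i, 0 ≤ B i := fun i => (hB0 i).le
  have hi0le : ∀ j : Fin m, i0 ≤ j := fun j => by
    simp only [hi0, Fin.le_def, Fin.val_mk]
    omega
  have hi01 : i0 ≠ i1 := by
    rw [hi0, hi1]
    simp [Fin.ext_iff]
  have hpair : ∀ i k : Fin m, i ≠ k → (1 - B i)*(1 - B k) ≤ (1 - B i0)*(1 - B i1) := by
    intro i k hik
    rcases lt_or_gt_of_ne hik with h | h
    · have hk1 : i1 ≤ k := by
        simp only [hi1, Fin.le_def, Fin.val_mk]
        have := Fin.lt_def.1 h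
        omega
      have h1 := hBmono i0 i (hi0le i)
      have h2 := hBmono i1 k hk1
      exact mul_le_mul (by linarith) (by linarith) (by linarith [hB1 k]) (by linarith [hB1 i0])
    · have hk1 : i1 ≤ i := by
        simp only [hi1, Fin.le_def, Fin.val_mk]
        have := Fin.lt_def.1 h
        omega
      have h1 := hBmono i0 k (hi0le k)
      have h2 := hBmono i1 i hk1
      rw [mul_comm]
      exact mul_le_mul (by linarith) (by linarith) (by linarith [hB1 i]) (by linarith [hB1 i0])
  have hqprod : ∏ i, (((bv i:ℝ)*((bv i:ℝ)-1))/((n:ℝ)*((n:ℝ)-1)))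
      = (∏ i, B i) * (∏ i, g i) := by
    rw [← Finset.prod_mul_distrib]
    refine Finset.prod_congr rfl fun i _ => ?_
    rw [hB, hg]
    show ((bv i:ℝ)*((bv i:ℝ)-1))/((n:ℝ)*((n:ℝ)-1)) = ((bv i:ℝ)/n) * (((bv i:ℝ)-1)/((n:ℝ)-1))
    field_simp
  rw [hqprod]
  set Pp : ℝ := ∏ i, B i with hPp
  set Gg : ℝ := ∏ i, g i with hGg
  set Ee : ℝ := ∑ i, (B i - g i) * ∏ k ∈ Finset.univ.erase i, B k with hEe
  have hD1 := aux_D1 hg0 hgB hB1 (Finset.univ : Finset (Fin m))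
  have hD2 := aux_D2 hg0 hgB hB1 (Finset.univ : Finset (Fin m))
  have hEW : ((n:ℝ)-1) * Ee = auxW B Finset.univ := by
    rw [hEe, auxW, Finset.mul_sum]
    refine Finset.sum_congr rfl fun i _ => ?_
    rw [hdiff i]
    field_simp
  have hPhidef : auxPhi B Finset.univ = 1 - Pp - auxW B Finset.univ := by
    rw [auxPhi, hPp]
  have hPnn : 0 ≤ Pp := Finset.prod_nonneg fun i _ => hB0' i
  have hnP : (0:ℝ) ≤ (n:ℝ) * Pp := by positivity
  have hprod_le : ((n:ℝ)-1) * (Pp - Gg) ≤ ((n:ℝ)-1) * Ee :=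
    mul_le_mul_of_nonneg_left hD1 hn1.le
  constructor
  · -- lower bound
    have hPhiLB : (1 - B i0)*(1 - B i1) ≤ auxPhi B Finset.univ :=
      aux_phi_lower hB0' hB1 hi01
    have h1 : (1 - B i0)*(1 - B i1) ≤ 1 + ((n:ℝ)-1)*Gg - (n:ℝ)*Pp := by
      rw [hPhidef] at hPhiLB
      nlinarith [hPhiLB, hEW, hprod_le]
    have h2 := mul_le_mul_of_nonneg_left h1 hnP
    nlinarith [h2]
  · -- upper bound
    have hmR : (2:ℝ) ≤ m := by exact_mod_cast hm
    have hsum_d : ∑ i, (B i - g i) = (∑ i, (1 - B i))/((n:ℝ)-1) := by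
      rw [Finset.sum_div]
      exact Finset.sum_congr rfl fun i _ => hdiff i
    have hS_nn : 0 ≤ ∑ i, (1 - B i) :=
      Finset.sum_nonneg fun i _ => by linarith [hB1 i]
    have hS_ub : ∑ i, (1 - B i) ≤ (m:ℝ) * (1 - B i0) := by
      calc ∑ i, (1 - B i) ≤ ∑ _i : Fin m, (1 - B i0) :=
            Finset.sum_le_sum fun i _ => by linarith [hBmono i0 i (hi0le i)]
        _ = (m:ℝ) * (1 - B i0) := by
            rw [Finset.sum_const, Finset.card_univ, Fintype.card_fin, nsmul_eq_mul]
    have hS_ub2 : ∑ i, (1 - B i) ≤ (m:ℝ) := by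
      calc ∑ i, (1 - B i) ≤ ∑ _i : Fin m, (1:ℝ) :=
            Finset.sum_le_sum fun i _ => by linarith [hB0 i]
        _ = (m:ℝ) := by
            rw [Finset.sum_const, Finset.card_univ, Fintype.card_fin, nsmul_eq_mul, mul_one]
    have h1B0 : 0 ≤ 1 - B i0 := by linarith [hB1 i0]
    have h1B1n : 1/(n:ℝ) ≤ 1 - B i1 := by
      have hb : B i1 ≤ ((n:ℝ)-1)/n := by
        rw [hB]
        show (bv i1:ℝ)/n ≤ ((n:ℝ)-1)/n
        gcongr
        exact hBub i1
      have : ((n:ℝ)-1)/n = 1 - 1/n := by field_simp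
      rw [this] at hb
      linarith
    -- bound on square term
    have hsq : ((n:ℝ)-1) * (∑ i, (B i - g i))^2
        ≤ 2*(m:ℝ)^2 * ((1 - B i0)*(1 - B i1)) := by
      rw [hsum_d, div_pow, sq ((n:ℝ)-1)]
      rw [show ((n:ℝ)-1) * ((∑ i, (1 - B i))^2 / (((n:ℝ)-1)*((n:ℝ)-1)))
          = (∑ i, (1 - B i))^2 / ((n:ℝ)-1) from by field_simp]
      have hnum : (∑ i, (1 - B i))^2 ≤ (m:ℝ)^2 * (1 - B i0) := by
        rw [sq]
        calc (∑ i, (1 - B i)) * (∑ i, (1 - B i))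
            ≤ ((m:ℝ) * (1 - B i0)) * (m:ℝ) :=
              mul_le_mul hS_ub hS_ub2 hS_nn (by positivity)
          _ = (m:ℝ)^2 * (1 - B i0) := by ring
      have hfrac : 1/((n:ℝ)-1) ≤ 2 * (1 - B i1) := by
        have h2n : 1/((n:ℝ)-1) ≤ 2/(n:ℝ) := by
          rw [div_le_div_iff₀ hn1 hnpos]
          have : (2:ℝ) ≤ n := by exact_mod_cast hn2
          linarith
        calc 1/((n:ℝ)-1) ≤ 2/(n:ℝ) := h2n
          _ = 2 * (1/(n:ℝ)) := by ring
          _ ≤ 2 * (1 - B i1) := by linarith [h1B1n]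
      calc (∑ i, (1 - B i))^2 / ((n:ℝ)-1)
          ≤ ((m:ℝ)^2 * (1 - B i0)) * (1/((n:ℝ)-1)) := by
            rw [div_eq_mul_inv, ← one_div]
            exact mul_le_mul_of_nonneg_right hnum (by positivity)
        _ ≤ ((m:ℝ)^2 * (1 - B i0)) * (2 * (1 - B i1)) := by
            refine mul_le_mul_of_nonneg_left hfrac (by positivity)
        _ = 2*(m:ℝ)^2 * ((1 - B i0)*(1 - B i1)) := by ring
    -- bound on Phi
    have hPhiUB : auxPhi B Finset.univ ≤ (m:ℝ)^2 * ((1 - B i0)*(1 - B i1)) := by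
      refine le_trans (aux_phi_upper hB0' hB1 Finset.univ) ?_
      have hterm : ∀ i : Fin m, (1 - B i) * ∑ k ∈ Finset.univ.erase i, (1 - B k)
          ≤ (m:ℝ) * ((1 - B i0)*(1 - B i1)) := by
        intro i
        rw [Finset.mul_sum]
        calc ∑ k ∈ Finset.univ.erase i, (1 - B i) * (1 - B k)
            ≤ ∑ _k ∈ Finset.univ.erase i, (1 - B i0)*(1 - B i1) :=
              Finset.sum_le_sum fun k hk =>
                hpair i k (Ne.symm (Finset.ne_of_mem_erase hk))
          _ = ((Finset.univ.erase i).card : ℝ) * ((1 - B i0)*(1 - B i1)) := by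
              rw [Finset.sum_const, nsmul_eq_mul]
          _ ≤ (m:ℝ) * ((1 - B i0)*(1 - B i1)) := by
              refine mul_le_mul_of_nonneg_right ?_
                (mul_nonneg h1B0 (by linarith [hB1 i1]))
              rw [Finset.card_erase_of_mem (Finset.mem_univ i), Finset.card_univ,
                Fintype.card_fin]
              have : ((m - 1 : ℕ):ℝ) ≤ (m:ℝ) := by
                have : m - 1 ≤ m := by omega
                exact_mod_cast this
              exact this
      calc ∑ i, ((1 - B i) * ∑ k ∈ Finset.univ.erase i, (1 - B k))
          ≤ ∑ _i : Fin m, (m:ℝ) * ((1 - B i0)*(1 - B i1)) :=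
            Finset.sum_le_sum fun i _ => hterm i
        _ = (m:ℝ) * ((m:ℝ) * ((1 - B i0)*(1 - B i1))) := by
            rw [Finset.sum_const, Finset.card_univ, Fintype.card_fin, nsmul_eq_mul]
        _ = (m:ℝ)^2 * ((1 - B i0)*(1 - B i1)) := by ring
    have hRub : 1 + ((n:ℝ)-1)*Gg - (n:ℝ)*Pp
        ≤ 3*(m:ℝ)^2 * ((1 - B i0)*(1 - B i1)) := by
      rw [hPhidef] at hPhiUB
      linarith [hEW, hPhiUB, hsq, mul_le_mul_of_nonneg_left hD2 hn1.le]
    have h2 := mul_le_mul_of_nonneg_left hRub hnP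
    linarith [h2]

end CouponAux

/-- **Theorem 2 (order of the cell variance).**
In the asymptotic coupon collector setting, `Var(X_n)` has the same asymptotic order as
`(1 - a_1(n)/n)(1 - a_2(n)/n) E(X_n)`: the ratio is eventually bounded between two strictly
positive constants (equivalently, its liminf and limsup are finite and strictly positive),
where `E(X_n) = n ∏ i, (a i n / n)`. -/
theorem coupon_variance_order
    (m : ℕ) (hm : 2 ≤ m)
    (Ω : ℕ → Type) [instΩ : ∀ n, MeasurableSpace (Ω n)]
    (P : ∀ n, Measure (Ω n)) (hP : ∀ n, IsProbabilityMeasure (P n))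
    (a : ℕ → Fin m → ℕ)
    (S : ∀ n, Fin m → Ω n → Finset (Fin n))
    (hmeas : ∀ n (i : Fin m) (s : Finset (Fin n)), MeasurableSet {ω | S n i ω = s})
    (hindep : ∀ n, iIndepFun (m := fun _ => ⊤) (S n) (P n))
    (hunif : ∀ n, 2 ≤ n → ∀ (i : Fin m) (s : Finset (Fin n)),
      P n {ω | S n i ω = s} = if s.card = a n i then ((n.choose (a n i) : ℝ≥0∞))⁻¹ else 0)
    (X : ∀ n, Ω n → ℕ)
    (hX : ∀ n ω, X n ω = (Finset.univ.inf fun i => S n i ω).card)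
    (hA2 : ∀ i : Fin m, Tendsto (fun n => a n i) atTop atTop ∧
      Tendsto (fun n => n - a n i) atTop atTop)
    (hA3 : ∀ n, 2 ≤ n → Monotone (a n) ∧
      1 ≤ a n ⟨0, by omega⟩ ∧ a n ⟨m - 1, by omega⟩ ≤ n - 1)
    (α : Fin m → ℝ) (hα : ∀ i, α i ∈ Set.Icc (0 : ℝ) 1)
    (hA4 : ∀ i : Fin m, Tendsto (fun n => (a n i : ℝ) / n) atTop (𝓝 (α i)))
    :
    ∃ c C : ℝ, 0 < c ∧ ∀ᶠ n in atTop,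
      c * ((1 - (a n ⟨0, by omega⟩ : ℝ) / n) * (1 - (a n ⟨1, by omega⟩ : ℝ) / n)
            * ∫ ω, (X n ω : ℝ) ∂(P n))
        ≤ variance (fun ω => (X n ω : ℝ)) (P n) ∧
      variance (fun ω => (X n ω : ℝ)) (P n)
        ≤ C * ((1 - (a n ⟨0, by omega⟩ : ℝ) / n) * (1 - (a n ⟨1, by omega⟩ : ℝ) / n)
            * ∫ ω, (X n ω : ℝ) ∂(P n)) := by
  refine ⟨1, 3*(m:ℝ)^2, one_pos, ?_⟩
  filter_upwards [Filter.eventually_ge_atTop 2] with n hn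
  haveI := hP n
  have h3 := hA3 n hn
  have hb1 : ∀ i, 1 ≤ a n i := fun i =>
    le_trans h3.2.1 (h3.1 (by simp [Fin.le_def]))
  have hbn : ∀ i, a n i ≤ n - 1 := fun i =>
    le_trans (h3.1 (by simp [Fin.le_def]; omega)) h3.2.2
  have hfm := fixed_main (by omega : 1 ≤ m) hn (P n) (a n) (S n) (hmeas n) (hindep n)
    (hunif n hn) hb1 (fun i => le_trans (hbn i) (by omega)) (X n) (hX n)
  have hvb := var_bounds hm hn (a n) h3.1 hb1 hbn
  rw [hfm.1, hfm.2]
  exact ⟨by rw [one_mul]; exact hvb.1, hvb.2⟩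
end

section
/- (Corollary 1, non-sufficiency example) In the coupon collector model with m = 2 and a_1(n) = a_2(n) = ⌈n^{2/3}⌉, one has α_1 = α_2 = 0, yet Var(X_n) / n^{1/3} → 1 as n → ∞; in particular Var(X_n) → ∞, showing that α_1, α_2 ∈ {0,1} does not suffice for the variance to converge. -/
open MeasureTheory ProbabilityTheory Filter Finset
open scoped ENNReal NNReal Topology
set_option maxHeartbeats 1000000
set_option linter.unusedSectionVars false

lemma count_supersets (n A : ℕ) (u : Finset (Fin n)) (h : u.card ≤ A) :
    ((powersetCard A (univ : Finset (Fin n))).filter (fun s => u ⊆ s)).card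
      = (n - u.card).choose (A - u.card) := by
  have key : ((powersetCard A (univ : Finset (Fin n))).filter (fun s => u ⊆ s)).card
      = (powersetCard (A - u.card) ((univ : Finset (Fin n)) \ u)).card := by
    apply Finset.card_bij' (fun s _ => s \ u) (fun t _ => t ∪ u)
    · intro s hs
      simp only [mem_filter, mem_powersetCard] at hs
      simp only [mem_powersetCard]
      exact ⟨sdiff_subset_sdiff hs.1.1 le_rfl, by rw [card_sdiff_of_subset hs.2, hs.1.2]⟩
    · intro t ht
      simp only [mem_powersetCard] at ht
      have hdisj : Disjoint t u := disjoint_of_subset_left ht.1 sdiff_disjoint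
      simp only [mem_filter, mem_powersetCard]
      refine ⟨⟨subset_univ _, ?_⟩, subset_union_right⟩
      rw [card_union_of_disjoint hdisj, ht.2]
      omega
    · intro s hs
      simp only [mem_filter, mem_powersetCard] at hs
      exact sdiff_union_of_subset hs.2
    · intro t ht
      simp only [mem_powersetCard] at ht
      have hdisj : Disjoint t u := disjoint_of_subset_left ht.1 sdiff_disjoint
      exact union_sdiff_cancel_right hdisj
  rw [key, card_powersetCard, card_sdiff_of_subset (subset_univ u), card_univ, Fintype.card_fin]

lemma count_mem (n A : ℕ) (hA : 1 ≤ A) (k : Fin n) :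
    ((powersetCard A (univ : Finset (Fin n))).filter (fun s => k ∈ s)).card
      = (n - 1).choose (A - 1) := by
  have := count_supersets n A {k} (by simpa using hA)
  simpa [singleton_subset_iff] using this

lemma count_mem2 (n A : ℕ) (hA : 2 ≤ A) (k l : Fin n) (hkl : k ≠ l) :
    ((powersetCard A (univ : Finset (Fin n))).filter (fun s => k ∈ s ∧ l ∈ s)).card
      = (n - 2).choose (A - 2) := by
  have hcard : ({k, l} : Finset (Fin n)).card = 2 := by
    rw [card_insert_of_notMem (by simpa using hkl), card_singleton]
  have := count_supersets n A {k, l} (by rw [hcard]; exact hA)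
  rw [hcard] at this
  rw [← this]
  congr 1
  apply filter_congr
  intro s _
  simp [insert_subset_iff, singleton_subset_iff]

lemma card_inter_eq_sum (n : ℕ) (s t : Finset (Fin n)) :
    (s ∩ t).card = ∑ k : Fin n, (if k ∈ s then 1 else 0) * (if k ∈ t then 1 else 0) := by
  rw [card_eq_sum_ones]
  rw [show s ∩ t = univ.filter (· ∈ s ∩ t) by rw [filter_mem_eq_inter, univ_inter]]
  rw [sum_filter]
  apply sum_congr rfl
  intro k _
  by_cases hs : k ∈ s <;> by_cases ht : k ∈ t <;> simp [hs, ht]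

lemma sum1 (n A : ℕ) (hA : 1 ≤ A) :
    (∑ s ∈ powersetCard A (univ : Finset (Fin n)),
      ∑ t ∈ powersetCard A (univ : Finset (Fin n)), (s ∩ t).card)
      = n * ((n - 1).choose (A - 1))^2 := by
  set PC := powersetCard A (univ : Finset (Fin n)) with hPC
  simp only [card_inter_eq_sum]
  calc (∑ s ∈ PC, ∑ t ∈ PC, ∑ k : Fin n,
          (if k ∈ s then 1 else 0) * (if k ∈ t then (1:ℕ) else 0))
      = ∑ s ∈ PC, ∑ k : Fin n, ∑ t ∈ PC,
          (if k ∈ s then 1 else 0) * (if k ∈ t then 1 else 0) :=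
        sum_congr rfl fun s _ => sum_comm
    _ = ∑ k : Fin n, ∑ s ∈ PC, ∑ t ∈ PC,
          (if k ∈ s then 1 else 0) * (if k ∈ t then 1 else 0) := sum_comm
    _ = ∑ k : Fin n, (∑ s ∈ PC, if k ∈ s then 1 else 0) *
          (∑ t ∈ PC, if k ∈ t then 1 else 0) := by
        exact sum_congr rfl fun k _ => (sum_mul_sum PC PC _ _).symm
    _ = ∑ k : Fin n, ((n-1).choose (A-1)) * ((n-1).choose (A-1)) := by
        apply sum_congr rfl
        intro k _
        rw [sum_boole]
        simp [hPC, count_mem n A hA k]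
    _ = n * ((n - 1).choose (A - 1))^2 := by
        rw [sum_const, card_univ, Fintype.card_fin]; ring

lemma sum2 (n A : ℕ) (hA : 2 ≤ A) :
    (∑ s ∈ powersetCard A (univ : Finset (Fin n)),
      ∑ t ∈ powersetCard A (univ : Finset (Fin n)), (s ∩ t).card ^ 2)
      = n * ((n - 1).choose (A - 1))^2 + n * (n-1) * ((n - 2).choose (A - 2))^2 := by
  set PC := powersetCard A (univ : Finset (Fin n)) with hPC
  have hcnt : ∀ k l : Fin n, (∑ s ∈ PC, (if k ∈ s then 1 else 0) * (if l ∈ s then (1:ℕ) else 0))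
      = if k = l then (n-1).choose (A-1) else (n-2).choose (A-2) := by
    intro k l
    have : ∀ s : Finset (Fin n), (if k ∈ s then 1 else 0) * (if l ∈ s then (1:ℕ) else 0)
        = if k ∈ s ∧ l ∈ s then 1 else 0 := by
      intro s; by_cases h1 : k ∈ s <;> by_cases h2 : l ∈ s <;> simp [h1, h2]
    simp only [this]
    rw [sum_boole]
    by_cases hkl : k = l
    · subst hkl
      simp only [and_self, if_pos rfl]
      simp [hPC, count_mem n A (by omega) k]
    · rw [if_neg hkl]
      simp [hPC, count_mem2 n A hA k l hkl]
  calc (∑ s ∈ PC, ∑ t ∈ PC, (s ∩ t).card ^ 2)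
      = ∑ s ∈ PC, ∑ t ∈ PC, ∑ k : Fin n, ∑ l : Fin n,
          ((if k ∈ s then 1 else 0) * (if l ∈ s then 1 else 0)) *
          ((if k ∈ t then 1 else 0) * (if l ∈ t then (1:ℕ) else 0)) := by
        apply sum_congr rfl; intro s _; apply sum_congr rfl; intro t _
        rw [card_inter_eq_sum, sq, sum_mul_sum]
        apply sum_congr rfl; intro k _; apply sum_congr rfl; intro l _
        ring
    _ = ∑ k : Fin n, ∑ l : Fin n, ∑ s ∈ PC, ∑ t ∈ PC,
          ((if k ∈ s then 1 else 0) * (if l ∈ s then 1 else 0)) *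
          ((if k ∈ t then 1 else 0) * (if l ∈ t then 1 else 0)) := by
        refine (sum_congr rfl fun s _ => sum_comm).trans (sum_comm.trans ?_)
        refine sum_congr rfl fun k _ => ?_
        exact (sum_congr rfl fun s _ => sum_comm).trans sum_comm
    _ = ∑ k : Fin n, ∑ l : Fin n,
          (∑ s ∈ PC, (if k ∈ s then 1 else 0) * (if l ∈ s then 1 else 0)) *
          (∑ t ∈ PC, (if k ∈ t then 1 else 0) * (if l ∈ t then 1 else 0)) := by
        apply sum_congr rfl; intro k _; apply sum_congr rfl; intro l _
        rw [sum_mul_sum]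
    _ = ∑ k : Fin n, ∑ l : Fin n,
          (if k = l then ((n-1).choose (A-1))^2 else ((n-2).choose (A-2))^2) := by
        apply sum_congr rfl; intro k _; apply sum_congr rfl; intro l _
        rw [hcnt k l]
        by_cases hkl : k = l <;> simp [hkl, sq]
    _ = n * ((n - 1).choose (A - 1))^2 + n * (n-1) * ((n - 2).choose (A - 2))^2 := by
        have : ∀ k : Fin n, (∑ l : Fin n,
            (if k = l then ((n-1).choose (A-1))^2 else ((n-2).choose (A-2))^2))
            = ((n-1).choose (A-1))^2 + (n-1) * ((n-2).choose (A-2))^2 := by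
          intro k
          rw [← Finset.add_sum_erase _ _ (mem_univ k), if_pos rfl]
          congr 1
          rw [sum_congr rfl (fun l hl => if_neg (Ne.symm (ne_of_mem_erase hl))), sum_const,
            card_erase_of_mem (mem_univ k), card_univ, Fintype.card_fin, smul_eq_mul]
        simp only [this]
        rw [sum_const, card_univ, Fintype.card_fin, smul_eq_mul]
        ring

section MT
variable {Ωn : Type} [MeasurableSpace Ωn] (μ : Measure Ωn) [IsProbabilityMeasure μ]
  {n : ℕ} (S0 S1 : Ωn → Finset (Fin n))

lemma fun_eq_sum_indicator
    (g : ℕ → ℝ) :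
    (fun ω => g ((S0 ω ∩ S1 ω).card))
      = fun ω => ∑ p : Finset (Fin n) × Finset (Fin n),
          Set.indicator ({ω | S0 ω = p.1} ∩ {ω | S1 ω = p.2})
            (fun _ => g ((p.1 ∩ p.2).card)) ω := by
  funext ω
  rw [Finset.sum_eq_single (S0 ω, S1 ω)]
  · rw [Set.indicator_of_mem]
    constructor <;> rfl
  · intro p _ hp
    apply Set.indicator_of_notMem
    intro hmem
    apply hp
    obtain ⟨h1, h2⟩ := hmem
    exact Prod.ext (by exact h1.symm) (by exact h2.symm)
  · intro h; exact absurd (Finset.mem_univ _) h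

lemma integral_g_eq
    (hm0 : ∀ s, MeasurableSet {ω | S0 ω = s}) (hm1 : ∀ s, MeasurableSet {ω | S1 ω = s})
    (hprod : ∀ s t : Finset (Fin n), μ ({ω | S0 ω = s} ∩ {ω | S1 ω = t})
        = μ {ω | S0 ω = s} * μ {ω | S1 ω = t})
    (g : ℕ → ℝ) :
    ∫ ω, g ((S0 ω ∩ S1 ω).card) ∂μ
      = ∑ p : Finset (Fin n) × Finset (Fin n),
          (μ {ω | S0 ω = p.1}).toReal * (μ {ω | S1 ω = p.2}).toReal * g ((p.1 ∩ p.2).card) := by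
  rw [fun_eq_sum_indicator S0 S1 g]
  rw [integral_finset_sum _ (fun p _ =>
    (integrable_const (g ((p.1 ∩ p.2).card))).indicator ((hm0 p.1).inter (hm1 p.2)))]
  apply Finset.sum_congr rfl
  intro p _
  rw [integral_indicator_const _ ((hm0 p.1).inter (hm1 p.2)), measureReal_def, hprod p.1 p.2,
    ENNReal.toReal_mul, smul_eq_mul]

lemma memLp_g (hm0 : ∀ s, MeasurableSet {ω | S0 ω = s}) (hm1 : ∀ s, MeasurableSet {ω | S1 ω = s})
    (g : ℕ → ℝ) :
    MemLp (fun ω => g ((S0 ω ∩ S1 ω).card)) 2 μ := by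
  rw [fun_eq_sum_indicator S0 S1 g]
  apply memLp_finsetSum
  intro p _
  exact (memLp_const _).indicator ((hm0 p.1).inter (hm1 p.2))

end MT

lemma sum_weighted (n A : ℕ) (g : ℕ → ℝ) :
    (∑ p : Finset (Fin n) × Finset (Fin n),
        (if p.1.card = A then ((n.choose A : ℝ))⁻¹ else 0) *
        (if p.2.card = A then ((n.choose A : ℝ))⁻¹ else 0) * g ((p.1 ∩ p.2).card))
      = ((n.choose A : ℝ))⁻¹ ^ 2 * ∑ s ∈ powersetCard A (univ : Finset (Fin n)),
          ∑ t ∈ powersetCard A (univ : Finset (Fin n)), g ((s ∩ t).card) := by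
  rw [Fintype.sum_prod_type]
  have hPC : powersetCard A (univ : Finset (Fin n)) = univ.filter (fun s => s.card = A) := by
    rw [powersetCard_eq_filter, powerset_univ]
  rw [hPC, mul_sum, sum_filter]
  apply sum_congr rfl
  intro s _
  by_cases hs : s.card = A
  · simp only [if_pos hs]
    rw [mul_sum, sum_filter]
    apply sum_congr rfl
    intro t _
    by_cases ht : t.card = A
    · simp only [if_pos ht]; ring
    · simp only [if_neg ht]; ring
  · simp only [if_neg hs]
    simp

lemma choose_id1 (n A : ℕ) (hA : 1 ≤ A) (hAn : A ≤ n) :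
    (n : ℝ) * (((n - 1).choose (A - 1) : ℕ) : ℝ) = (A : ℝ) * ((n.choose A : ℕ) : ℝ) := by
  obtain ⟨n', rfl⟩ : ∃ n', n = n' + 1 := ⟨n - 1, by omega⟩
  obtain ⟨A', rfl⟩ : ∃ A', A = A' + 1 := ⟨A - 1, by omega⟩
  have := Nat.add_one_mul_choose_eq n' A'
  simp only [Nat.add_sub_cancel]
  exact_mod_cast this.trans (Nat.mul_comm _ _)

lemma var_eq {Ωn : Type} [MeasurableSpace Ωn] (μ : Measure Ωn) [IsProbabilityMeasure μ]
    {n A : ℕ} (hn : 2 ≤ n) (hA2 : 2 ≤ A) (hAn : A ≤ n)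
    (S0 S1 : Ωn → Finset (Fin n))
    (hm0 : ∀ s, MeasurableSet {ω | S0 ω = s}) (hm1 : ∀ s, MeasurableSet {ω | S1 ω = s})
    (hprod : ∀ s t : Finset (Fin n), μ ({ω | S0 ω = s} ∩ {ω | S1 ω = t})
        = μ {ω | S0 ω = s} * μ {ω | S1 ω = t})
    (hu0 : ∀ s, μ {ω | S0 ω = s} = if s.card = A then ((n.choose A : ℝ≥0∞))⁻¹ else 0)
    (hu1 : ∀ s, μ {ω | S1 ω = s} = if s.card = A then ((n.choose A : ℝ≥0∞))⁻¹ else 0) :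
    variance (fun ω => ((S0 ω ∩ S1 ω).card : ℝ)) μ
      = (A:ℝ)^2/n + (A:ℝ)^2*((A:ℝ)-1)^2/((n:ℝ)*((n:ℝ)-1)) - ((A:ℝ)^2/(n:ℝ))^2 := by
  have htr0 : ∀ s : Finset (Fin n), (μ {ω | S0 ω = s}).toReal
      = if s.card = A then ((n.choose A : ℝ))⁻¹ else 0 := by
    intro s; rw [hu0]; split <;> simp
  have htr1 : ∀ s : Finset (Fin n), (μ {ω | S1 ω = s}).toReal
      = if s.card = A then ((n.choose A : ℝ))⁻¹ else 0 := by
    intro s; rw [hu1]; split <;> simp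
  -- the two moments
  have hint : ∀ g : ℕ → ℝ, ∫ ω, g ((S0 ω ∩ S1 ω).card) ∂μ
      = ((n.choose A : ℝ))⁻¹ ^ 2 * ∑ s ∈ powersetCard A (univ : Finset (Fin n)),
          ∑ t ∈ powersetCard A (univ : Finset (Fin n)), g ((s ∩ t).card) := by
    intro g
    rw [integral_g_eq μ S0 S1 hm0 hm1 hprod g, ← sum_weighted n A g]
    apply sum_congr rfl
    intro p _
    rw [htr0, htr1]
  -- abbreviations
  set N : ℝ := ((n.choose A : ℕ) : ℝ) with hN
  set c1 : ℝ := (((n - 1).choose (A - 1) : ℕ) : ℝ) with hc1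
  set c2 : ℝ := (((n - 2).choose (A - 2) : ℕ) : ℝ) with hc2
  have hNpos : (0:ℝ) < N := by
    rw [hN]; exact_mod_cast Nat.choose_pos hAn
  have hN0 : N ≠ 0 := ne_of_gt hNpos
  have hn0 : (n:ℝ) ≠ 0 := by
    have : (2:ℝ) ≤ (n:ℝ) := by exact_mod_cast hn
    linarith
  have hn1 : (n:ℝ) - 1 ≠ 0 := by
    have : (2:ℝ) ≤ (n:ℝ) := by exact_mod_cast hn
    linarith
  -- first moment
  have hmom1 : ∫ ω, ((S0 ω ∩ S1 ω).card : ℝ) ∂μ = N⁻¹ ^ 2 * ((n:ℝ) * c1^2) := by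
    rw [hint (fun m => (m : ℝ))]
    congr 1
    have : (∑ s ∈ powersetCard A (univ : Finset (Fin n)),
        ∑ t ∈ powersetCard A (univ : Finset (Fin n)), (((s ∩ t).card : ℕ) : ℝ))
        = ((∑ s ∈ powersetCard A (univ : Finset (Fin n)),
        ∑ t ∈ powersetCard A (univ : Finset (Fin n)), (s ∩ t).card : ℕ) : ℝ) := by
      push_cast; rfl
    rw [this, sum1 n A (by omega)]
    push_cast [hc1]
    ring
  -- second moment
  have hmom2 : ∫ ω, (((S0 ω ∩ S1 ω).card : ℝ))^2 ∂μ
      = N⁻¹ ^ 2 * ((n:ℝ) * c1^2 + (n:ℝ) * ((n:ℝ)-1) * c2^2) := by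
    have := hint (fun m => (m : ℝ)^2)
    rw [this]
    congr 1
    have hcast : (∑ s ∈ powersetCard A (univ : Finset (Fin n)),
        ∑ t ∈ powersetCard A (univ : Finset (Fin n)), (((s ∩ t).card : ℕ) : ℝ)^2)
        = ((∑ s ∈ powersetCard A (univ : Finset (Fin n)),
        ∑ t ∈ powersetCard A (univ : Finset (Fin n)), (s ∩ t).card ^ 2 : ℕ) : ℝ) := by
      push_cast; rfl
    rw [hcast, sum2 n A hA2]
    push_cast [hc1, hc2, Nat.cast_sub (show 1 ≤ n by omega)]
    ring
  -- choose identities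
  have hid1 : (n:ℝ) * c1 = (A:ℝ) * N := choose_id1 n A (by omega) hAn
  have hid2 : ((n:ℝ) - 1) * c2 = ((A:ℝ) - 1) * c1 := by
    have h := choose_id1 (n-1) (A-1) (by omega) (by omega)
    have e1 : n - 1 - 1 = n - 2 := by omega
    have e2 : A - 1 - 1 = A - 2 := by omega
    rw [e1, e2] at h
    rw [hc1, hc2]
    push_cast [Nat.cast_sub (show 1 ≤ n by omega), Nat.cast_sub (show 1 ≤ A by omega)] at h ⊢
    linarith
  have hc1v : c1 = (A:ℝ) * N / n := by field_simp; linarith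
  have hc2v : c2 = ((A:ℝ) - 1) * ((A:ℝ) * N) / (((n:ℝ) - 1) * n) := by
    rw [eq_div_iff (by exact mul_ne_zero hn1 hn0)]
    have : c2 * (((n:ℝ) - 1) * ↑n) = (((n:ℝ)-1) * c2) * n := by ring
    rw [this, hid2, hc1v]
    field_simp
  -- variance
  have hmem : MemLp (fun ω => ((S0 ω ∩ S1 ω).card : ℝ)) 2 μ :=
    memLp_g μ S0 S1 hm0 hm1 (fun m => (m:ℝ))
  rw [variance_eq_sub hmem]
  have hpow : (fun ω => ((S0 ω ∩ S1 ω).card : ℝ)) ^ 2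
      = fun ω => (((S0 ω ∩ S1 ω).card : ℝ))^2 := rfl
  rw [hpow, hmom2, hmom1, hc1v, hc2v]
  field_simp

noncomputable def bR (n : ℕ) : ℝ := (⌈(n:ℝ) ^ ((2:ℝ)/3)⌉₊ : ℕ)

noncomputable def Vf (n : ℕ) : ℝ :=
  bR n ^ 2 / n + bR n ^ 2 * (bR n - 1) ^ 2 / ((n:ℝ) * ((n:ℝ) - 1)) - (bR n ^ 2 / (n:ℝ)) ^ 2

lemma bR_lower (n : ℕ) : (n:ℝ) ^ ((2:ℝ)/3) ≤ bR n := Nat.le_ceil _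

lemma bR_upper (n : ℕ) : bR n ≤ (n:ℝ) ^ ((2:ℝ)/3) + 1 := by
  have h : (⌈(n:ℝ) ^ ((2:ℝ)/3)⌉₊ : ℝ) < (n:ℝ) ^ ((2:ℝ)/3) + 1 :=
    Nat.ceil_lt_add_one (by positivity)
  exact le_of_lt h

lemma bR_nonneg (n : ℕ) : 0 ≤ bR n := Nat.cast_nonneg _

lemma tcube (n : ℕ) : ((n:ℝ) ^ ((1:ℝ)/3)) ^ 3 = (n:ℝ) := by
  rw [← Real.rpow_natCast ((n:ℝ) ^ ((1:ℝ)/3)) 3, ← Real.rpow_mul (Nat.cast_nonneg n)]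
  norm_num

lemma tsq (n : ℕ) : ((n:ℝ) ^ ((1:ℝ)/3)) ^ 2 = (n:ℝ) ^ ((2:ℝ)/3) := by
  rw [← Real.rpow_natCast ((n:ℝ) ^ ((1:ℝ)/3)) 2, ← Real.rpow_mul (Nat.cast_nonneg n)]
  norm_num

lemma bullet1 : Tendsto (fun n : ℕ => bR n / n) atTop (𝓝 0) := by
  have hup : Tendsto (fun n : ℕ => (n:ℝ) ^ (-(1:ℝ)/3) + (n:ℝ)⁻¹) atTop (𝓝 0) := by
    have h1 : Tendsto (fun n : ℕ => (n:ℝ) ^ (-(1:ℝ)/3)) atTop (𝓝 0) := by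
      have := (tendsto_rpow_neg_atTop (y := (1:ℝ)/3) (by norm_num)).comp
        (tendsto_natCast_atTop_atTop (R := ℝ))
      convert this using 2 with n
      norm_num [Function.comp]
    have h2 : Tendsto (fun n : ℕ => (n:ℝ)⁻¹) atTop (𝓝 0) :=
      tendsto_inv_atTop_zero.comp (tendsto_natCast_atTop_atTop (R := ℝ))
    simpa using h1.add h2
  apply tendsto_of_tendsto_of_tendsto_of_le_of_le' tendsto_const_nhds hup
  · exact Eventually.of_forall fun n => div_nonneg (bR_nonneg n) (Nat.cast_nonneg n)
  · filter_upwards [eventually_ge_atTop 1] with n hn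
    have hn0 : (0:ℝ) < (n:ℝ) := by exact_mod_cast hn
    have hb : bR n ≤ (n:ℝ) ^ ((2:ℝ)/3) + 1 := bR_upper n
    have key : (n:ℝ) ^ ((2:ℝ)/3) / n = (n:ℝ) ^ (-(1:ℝ)/3) := by
      rw [show (-(1:ℝ)/3) = (2:ℝ)/3 - 1 by norm_num, Real.rpow_sub hn0, Real.rpow_one]
    calc bR n / n ≤ ((n:ℝ) ^ ((2:ℝ)/3) + 1) / n := by
          gcongr
        _ = (n:ℝ) ^ (-(1:ℝ)/3) + (n:ℝ)⁻¹ := by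
          rw [add_div, key, one_div]

lemma tendsto_t : Tendsto (fun n : ℕ => (n:ℝ) ^ ((1:ℝ)/3)) atTop atTop :=
  (tendsto_rpow_atTop (by norm_num : (0:ℝ) < (1:ℝ)/3)).comp (tendsto_natCast_atTop_atTop (R := ℝ))

lemma tendsto_D : Tendsto (fun n : ℕ => ((n:ℝ) - 1)⁻¹) atTop (𝓝 0) := by
  have h : Tendsto (fun n : ℕ => (n:ℝ) - 1) atTop atTop :=
    tendsto_atTop_add_const_right _ (-1) (tendsto_natCast_atTop_atTop (R := ℝ)) |>.congr
      (fun n => by ring)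
  exact h.inv_tendsto_atTop

lemma tendsto_E : Tendsto (fun n : ℕ => 1 + ((n:ℝ) - 1)⁻¹) atTop (𝓝 1) := by
  simpa using (tendsto_const_nhds (x := (1:ℝ))).add tendsto_D

lemma tendsto_u : Tendsto (fun n : ℕ => bR n / (n:ℝ) ^ ((2:ℝ)/3)) atTop (𝓝 1) := by
  have hw : Tendsto (fun n : ℕ => (n:ℝ) ^ ((2:ℝ)/3)) atTop atTop :=
    (tendsto_rpow_atTop (by norm_num : (0:ℝ) < (2:ℝ)/3)).comp (tendsto_natCast_atTop_atTop (R := ℝ))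
  have hup : Tendsto (fun n : ℕ => 1 + ((n:ℝ) ^ ((2:ℝ)/3))⁻¹) atTop (𝓝 1) := by
    simpa using (tendsto_const_nhds (x := (1:ℝ))).add hw.inv_tendsto_atTop
  apply tendsto_of_tendsto_of_tendsto_of_le_of_le' tendsto_const_nhds hup
  · filter_upwards [eventually_ge_atTop 1] with n hn
    have hn0 : (0:ℝ) < (n:ℝ) ^ ((2:ℝ)/3) := by
      have : (0:ℝ) < (n:ℝ) := by exact_mod_cast hn
      positivity
    rw [le_div_iff₀ hn0, one_mul]
    exact bR_lower n
  · filter_upwards [eventually_ge_atTop 1] with n hn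
    have hn0 : (0:ℝ) < (n:ℝ) ^ ((2:ℝ)/3) := by
      have : (0:ℝ) < (n:ℝ) := by exact_mod_cast hn
      positivity
    rw [div_le_iff₀ hn0, add_mul, one_mul, inv_mul_cancel₀ (ne_of_gt hn0)]
    exact bR_upper n

lemma tendsto_L1 : Tendsto (fun n : ℕ => (n:ℝ) ^ ((1:ℝ)/3) / (n:ℝ)) atTop (𝓝 0) := by
  have h : Tendsto (fun n : ℕ => (n:ℝ) ^ (-(2:ℝ)/3)) atTop (𝓝 0) := by
    have := (tendsto_rpow_neg_atTop (y := (2:ℝ)/3) (by norm_num)).comp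
      (tendsto_natCast_atTop_atTop (R := ℝ))
    convert this using 2 with n
    norm_num [Function.comp]
  apply h.congr'
  filter_upwards [eventually_ge_atTop 1] with n hn
  have hn0 : (0:ℝ) < (n:ℝ) := by exact_mod_cast hn
  rw [show (-(2:ℝ)/3) = (1:ℝ)/3 - 1 by norm_num, Real.rpow_sub hn0, Real.rpow_one]

lemma tendsto_L2 : Tendsto (fun n : ℕ => (n:ℝ) ^ ((2:ℝ)/3) / (n:ℝ)) atTop (𝓝 0) := by
  have h : Tendsto (fun n : ℕ => (n:ℝ) ^ (-(1:ℝ)/3)) atTop (𝓝 0) := by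
    have := (tendsto_rpow_neg_atTop (y := (1:ℝ)/3) (by norm_num)).comp
      (tendsto_natCast_atTop_atTop (R := ℝ))
    convert this using 2 with n
    norm_num [Function.comp]
  apply h.congr'
  filter_upwards [eventually_ge_atTop 1] with n hn
  have hn0 : (0:ℝ) < (n:ℝ) := by exact_mod_cast hn
  rw [show (-(1:ℝ)/3) = (2:ℝ)/3 - 1 by norm_num, Real.rpow_sub hn0, Real.rpow_one]

lemma tendsto_A : Tendsto (fun n : ℕ => (n:ℝ) ^ ((1:ℝ)/3) / ((n:ℝ) - 1)) atTop (𝓝 0) := by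
  have h := tendsto_E.mul tendsto_L1
  rw [one_mul (0:ℝ)] at h
  apply h.congr'
  filter_upwards [eventually_ge_atTop 2] with n hn
  have hn0 : (n:ℝ) ≠ 0 := by
    have : (2:ℝ) ≤ (n:ℝ) := by exact_mod_cast hn
    linarith
  have hn1 : (n:ℝ) - 1 ≠ 0 := by
    have : (2:ℝ) ≤ (n:ℝ) := by exact_mod_cast hn
    linarith
  field_simp
  ring

lemma tendsto_B : Tendsto (fun n : ℕ => (n:ℝ) ^ ((2:ℝ)/3) / ((n:ℝ) - 1)) atTop (𝓝 0) := by
  have h := tendsto_E.mul tendsto_L2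
  rw [one_mul (0:ℝ)] at h
  apply h.congr'
  filter_upwards [eventually_ge_atTop 2] with n hn
  have hn0 : (n:ℝ) ≠ 0 := by
    have : (2:ℝ) ≤ (n:ℝ) := by exact_mod_cast hn
    linarith
  have hn1 : (n:ℝ) - 1 ≠ 0 := by
    have : (2:ℝ) ≤ (n:ℝ) := by exact_mod_cast hn
    linarith
  field_simp
  ring

lemma bullet2 : Tendsto (fun n : ℕ => Vf n / (n:ℝ) ^ ((1:ℝ)/3)) atTop (𝓝 1) := by
  set u : ℕ → ℝ := fun n => bR n / (n:ℝ) ^ ((2:ℝ)/3) with hu_def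
  have hG : Tendsto (fun n : ℕ => u n ^ 2 + u n ^ 2 *
      (u n ^ 2 * ((n:ℝ) ^ ((1:ℝ)/3) / ((n:ℝ) - 1))
        - 2 * u n * ((n:ℝ) ^ ((2:ℝ)/3) / ((n:ℝ) - 1)) + ((n:ℝ) - 1)⁻¹))
      atTop (𝓝 1) := by
    have h := (tendsto_u.pow 2).add ((tendsto_u.pow 2).mul
      (((tendsto_u.pow 2).mul tendsto_A).sub
        (((tendsto_const_nhds (x := (2:ℝ))).mul tendsto_u).mul tendsto_B) |>.add tendsto_D))
    norm_num at h
    exact h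
  apply hG.congr'
  filter_upwards [eventually_ge_atTop 2] with n hn
  have hn2 : (2:ℝ) ≤ (n:ℝ) := by exact_mod_cast hn
  have hnpos : (0:ℝ) < (n:ℝ) := by linarith
  set t : ℝ := (n:ℝ) ^ ((1:ℝ)/3) with ht_def
  have ht0 : t ≠ 0 := by
    have : (0:ℝ) < t := Real.rpow_pos_of_pos hnpos _
    exact ne_of_gt this
  have ht3 : t ^ 3 = (n:ℝ) := tcube n
  have ht2 : t ^ 2 = (n:ℝ) ^ ((2:ℝ)/3) := tsq n
  have htc1 : t ^ 3 - 1 ≠ 0 := by rw [ht3]; linarith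
  set b : ℝ := bR n with hb_def
  have hu_eq : u n = b / t ^ 2 := by rw [hu_def, ht2]
  rw [Vf, hu_eq, ← hb_def, ← ht2, ← ht3]
  field_simp
  ring


/-- **Corollary 1 (non-sufficiency example).**
In the coupon collector model with `m = 2` collectors and `a_1(n) = a_2(n) = ⌈n^(2/3)⌉`,
one has `α_1 = α_2 = 0` (i.e. `a_i(n)/n → 0`), yet `Var(X_n) / n^(1/3) → 1`; in particular
`Var(X_n) → ∞`, so `α_1, α_2 ∈ {0, 1}` does not suffice for the variance to converge. -/
theorem coupon_variance_nonsufficiency_example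
    (Ω : ℕ → Type) [instΩ : ∀ n, MeasurableSpace (Ω n)]
    (P : ∀ n, Measure (Ω n)) (hP : ∀ n, IsProbabilityMeasure (P n))
    (a : ℕ → Fin 2 → ℕ)
    (ha : ∀ n (i : Fin 2), a n i = ⌈(n : ℝ) ^ ((2 : ℝ) / 3)⌉₊)
    (S : ∀ n, Fin 2 → Ω n → Finset (Fin n))
    (hmeas : ∀ n (i : Fin 2) (s : Finset (Fin n)), MeasurableSet {ω | S n i ω = s})
    (hindep : ∀ n, iIndepFun (m := fun _ => ⊤) (S n) (P n))
    (hunif : ∀ n, 2 ≤ n → ∀ (i : Fin 2) (s : Finset (Fin n)),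
      P n {ω | S n i ω = s} = if s.card = a n i then ((n.choose (a n i) : ℝ≥0∞))⁻¹ else 0)
    (X : ∀ n, Ω n → ℕ)
    (hX : ∀ n ω, X n ω = (Finset.univ.inf fun i => S n i ω).card) :
    (∀ i : Fin 2, Tendsto (fun n => (a n i : ℝ) / n) atTop (𝓝 0)) ∧
    Tendsto (fun n => variance (fun ω => (X n ω : ℝ)) (P n) / (n : ℝ) ^ ((1 : ℝ) / 3))
      atTop (𝓝 1) ∧
    Tendsto (fun n => variance (fun ω => (X n ω : ℝ)) (P n)) atTop atTop := by
  have hvar : ∀ n : ℕ, 2 ≤ n → variance (fun ω => (X n ω : ℝ)) (P n) = Vf n := by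
    intro n hn
    have hP' := hP n
    set A : ℕ := ⌈(n : ℝ) ^ ((2 : ℝ) / 3)⌉₊ with hAdef
    have hnR : (2:ℝ) ≤ (n:ℝ) := by exact_mod_cast hn
    have hA2 : 2 ≤ A := by
      have h1 : (1:ℝ) < (n:ℝ) ^ ((2:ℝ)/3) := by
        rw [Real.one_lt_rpow_iff_of_pos (by linarith)]
        left
        constructor
        · linarith
        · norm_num
      have := Nat.lt_ceil.mpr (by exact_mod_cast h1 : ((1:ℕ):ℝ) < (n:ℝ) ^ ((2:ℝ)/3))
      omega
    have hAn : A ≤ n := by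
      apply Nat.ceil_le.mpr
      calc (n:ℝ) ^ ((2:ℝ)/3) ≤ (n:ℝ) ^ ((1:ℝ)) := by
            apply Real.rpow_le_rpow_of_exponent_le (by linarith)
            norm_num
        _ = (n:ℝ) := by rw [Real.rpow_one]
    have hfeq : (fun ω => (X n ω : ℝ)) = fun ω => ((S n 0 ω ∩ S n 1 ω).card : ℝ) := by
      funext ω
      have hinf : (univ.inf fun i => S n i ω) = S n 0 ω ∩ S n 1 ω := by
        show (({0, 1} : Finset (Fin 2)).inf fun i => S n i ω) = _
        rw [Finset.inf_insert, Finset.inf_singleton]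
        rfl
      rw [hX, hinf]
    have hprod : ∀ s t : Finset (Fin n),
        P n ({ω | S n 0 ω = s} ∩ {ω | S n 1 ω = t})
          = P n {ω | S n 0 ω = s} * P n {ω | S n 1 ω = t} := by
      intro s t
      have hi := (hindep n).indepFun (show (0 : Fin 2) ≠ 1 by decide)
      have h := hi.measure_inter_preimage_eq_mul (s := {s}) (t := {t})
        MeasurableSpace.measurableSet_top MeasurableSpace.measurableSet_top
      have e0 : S n 0 ⁻¹' {s} = {ω | S n 0 ω = s} := by ext ω; simp
      have e1 : S n 1 ⁻¹' {t} = {ω | S n 1 ω = t} := by ext ω; simp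
      rwa [e0, e1] at h
    have hu0 : ∀ s : Finset (Fin n), P n {ω | S n 0 ω = s}
        = if s.card = A then ((n.choose A : ℝ≥0∞))⁻¹ else 0 := by
      intro s
      have := hunif n hn 0 s
      rwa [ha n 0] at this
    have hu1 : ∀ s : Finset (Fin n), P n {ω | S n 1 ω = s}
        = if s.card = A then ((n.choose A : ℝ≥0∞))⁻¹ else 0 := by
      intro s
      have := hunif n hn 1 s
      rwa [ha n 1] at this
    rw [hfeq, var_eq (P n) hn hA2 hAn (S n 0) (S n 1) (hmeas n 0) (hmeas n 1) hprod hu0 hu1]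
    rw [Vf, bR]
  have h2 : Tendsto (fun n => variance (fun ω => (X n ω : ℝ)) (P n) / (n : ℝ) ^ ((1 : ℝ) / 3))
      atTop (𝓝 1) := by
    apply bullet2.congr'
    filter_upwards [eventually_ge_atTop 2] with n hn
    rw [hvar n hn]
  have h1 : ∀ i : Fin 2, Tendsto (fun n => (a n i : ℝ) / n) atTop (𝓝 0) := by
    intro i
    have : (fun n : ℕ => (a n i : ℝ) / n) = fun n => bR n / n := by
      funext n
      rw [ha n i, bR]
    rw [this]
    exact bullet1
  refine ⟨h1, h2, ?_⟩
  have h3 := Tendsto.pos_mul_atTop zero_lt_one h2 tendsto_t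
  apply h3.congr'
  filter_upwards [eventually_ge_atTop 1] with n hn
  have hn0 : (0:ℝ) < (n:ℝ) := by exact_mod_cast hn
  have ht0 : (n:ℝ) ^ ((1:ℝ)/3) ≠ 0 := ne_of_gt (Real.rpow_pos_of_pos hn0 _)
  field_simp
end
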